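/- arXiv:1908.05452 — 9 statements merged into one kernel-verified Lean document; each statement's English description precedes it below -/
import Mathlib

section
/- Let p be a prime, R a commutative ring with p = 0 in R, and n ≤ m positive integers. A polynomial f ∈ R[X] of degree < p^n induces an R-Hopf-algebra homomorphism R[X]/(X^{p^m}) → R[X]/(X^{p^n}) via X ↦ f(X) if and only if f = a_0 X + a_1 X^p + a_2 X^{p^2} + ⋯ + a_{n-1} X^{p^{n-1}} for some a_0, …, a_{n-1} ∈ R. In particular, the group of such homomorphisms (under addition of the images of X) is isomorphic to the additive group R^n. -/
open Polynomial in
private lemma myHasseDeriv_map {R S : Type*} [CommSemiring R] [CommSemiring S] (g : R →+* S)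
    (k : ℕ) (f : R[X]) : hasseDeriv k (f.map g) = (hasseDeriv k f).map g := by
  ext n
  simp [hasseDeriv_coeff, coeff_map]

private lemma myChoose (p k : ℕ) (hp : p.Prime) (h2 : 2 ≤ k) (h : ∀ i, k ≠ p ^ i) :
    ∃ a, 0 < a ∧ a < k ∧ ¬ p ∣ k.choose a := by
  haveI : Fact p.Prime := ⟨hp⟩
  set v := k.factorization p with hv
  have hd : p ^ v ∣ k := Nat.ordProj_dvd k p
  refine ⟨p ^ v, pow_pos hp.pos v, ?_, ?_⟩
  · rcases lt_or_eq_of_le (Nat.le_of_dvd (by omega) hd) with h' | h'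
    · exact h'
    · exact absurd h'.symm (h v)
  · have hcong := Choose.choose_modEq_choose_mul_prod_range_choose
      (n := k) (k := p ^ v) (p := p) v
    rw [Int.ModEq] at hcong
    have hcast : ((k.choose (p ^ v) : ℤ) : ZMod p)
        = (((k / p ^ v).choose (p ^ v / p ^ v) *
            ∏ i ∈ Finset.range v, (k / p ^ i % p).choose (p ^ v / p ^ i % p) : ℤ) : ZMod p) := by
      exact_mod_cast (ZMod.intCast_eq_intCast_iff _ _ _).mpr hcong
    rw [Nat.div_self (pow_pos hp.pos v)] at hcast
    have hprod : ∏ i ∈ Finset.range v, (k / p ^ i % p).choose (p ^ v / p ^ i % p) = 1 := by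
      apply Finset.prod_eq_one
      intro i hi
      rw [Finset.mem_range] at hi
      have : p ^ v / p ^ i % p = 0 := by
        rw [Nat.pow_div hi.le hp.pos]
        exact Nat.mod_eq_zero_of_dvd (dvd_pow_self p (by omega))
      simp [this]
    rw [hprod, Nat.choose_one_right] at hcast
    have hcast' : ((k.choose (p ^ v) : ℕ) : ZMod p) = ((k / p ^ v * 1 : ℕ) : ZMod p) := by
      exact_mod_cast hcast
    intro hdvd
    rw [Nat.mul_one, (ZMod.natCast_eq_zero_iff _ _).mpr hdvd] at hcast'
    have hnd : ¬ p ∣ k / p ^ v := Nat.not_dvd_ordCompl hp (by omega)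
    exact hnd ((ZMod.natCast_eq_zero_iff _ _).mp hcast'.symm)

private lemma myUnit {R : Type*} [CommRing R] {p : ℕ} (hp : p.Prime) [CharP R p] {c : ℕ}
    (hc : ¬ p ∣ c) : IsUnit (c : R) := by
  haveI : Fact p.Prime := ⟨hp⟩
  have h0 : (c : ZMod p) ≠ 0 := fun h => hc ((ZMod.natCast_eq_zero_iff _ _).mp h)
  have hu : IsUnit (c : ZMod p) := h0.isUnit
  have := hu.map (ZMod.castHom dvd_rfl R)
  rwa [map_natCast] at this

open Polynomial in
private lemma myKey {R : Type*} [CommRing R] (f : R[X])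
    (H : Polynomial.aeval ((C X : R[X][X]) + X) f = C f + f.map C) :
    f.coeff 0 = 0 ∧ ∀ k, 1 ≤ k → hasseDeriv k f = C (f.coeff k) := by
  have h1 : Polynomial.aeval ((C X : R[X][X]) + X) f = Polynomial.taylor X (f.map C) := by
    rw [Polynomial.taylor_apply, add_comm (C X : R[X][X]) X]
    show _ = Polynomial.eval₂ C (X + C X) (f.map C)
    rw [Polynomial.eval₂_map, Polynomial.aeval_def]
    rfl
  rw [h1] at H
  constructor
  · have := congrArg (fun g => Polynomial.coeff g 0) H
    simp only [Polynomial.taylor_coeff_zero, Polynomial.coeff_add, Polynomial.coeff_C,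
      Polynomial.coeff_map, if_true, eq_self_iff_true, Polynomial.eval_map,
      Polynomial.eval₂_C_X] at this
    rw [left_eq_add, Polynomial.C_eq_zero] at this
    exact this
  · intro k hk
    have := congrArg (fun g => Polynomial.coeff g k) H
    simp only [Polynomial.taylor_coeff, Polynomial.coeff_add, Polynomial.coeff_C,
      Polynomial.coeff_map, if_neg (by omega : ¬ k = 0), zero_add] at this
    rw [myHasseDeriv_map, Polynomial.eval_map, Polynomial.eval₂_C_X] at this
    exact this

/-- For `p` prime, `R` a commutative ring with `p = 0`, and `0 < n ≤ m`, a polynomial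
`f` of degree `< p^n` induces a Hopf algebra homomorphism `R[X]/(X^{p^m}) → R[X]/(X^{p^n})`
via `X ↦ f(X)` (i.e. `f^{p^m} ≡ 0 mod X^{p^n}` and `Δ(f) = f⊗1 + 1⊗f` in
`R[X]/(X^{p^n}) ⊗ R[X]/(X^{p^n}) = R[X₀,X₁]/(X₀^{p^n}, X₁^{p^n})`) if and only if
`f = a₀X + a₁X^p + ⋯ + a_{n-1}X^{p^{n-1}}` for some `aᵢ ∈ R`. -/
theorem stmt2 (p : ℕ) (hp : p.Prime) (R : Type*) [CommRing R] (hpR : (p : R) = 0)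
    (n m : ℕ) (hn : 0 < n) (hnm : n ≤ m) (f : Polynomial R) (hdeg : f.natDegree < p ^ n) :
    ((Polynomial.X ^ p ^ n ∣ f ^ p ^ m) ∧
      Polynomial.aeval (MvPolynomial.X 0 + MvPolynomial.X 1 : MvPolynomial (Fin 2) R) f
        - Polynomial.aeval (MvPolynomial.X 0 : MvPolynomial (Fin 2) R) f
        - Polynomial.aeval (MvPolynomial.X 1 : MvPolynomial (Fin 2) R) f
        ∈ Ideal.span {(MvPolynomial.X 0 : MvPolynomial (Fin 2) R) ^ p ^ n,
            (MvPolynomial.X 1 : MvPolynomial (Fin 2) R) ^ p ^ n})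
    ↔ ∃ a : Fin n → R,
        f = ∑ i : Fin n, Polynomial.C (a i) * Polynomial.X ^ p ^ (i : ℕ) := by
  classical
  haveI : Fact p.Prime := ⟨hp⟩
  by_cases hR : Subsingleton R
  · haveI : Subsingleton (Polynomial R) := by
      constructor; intro a b; ext j; exact Subsingleton.elim _ _
    haveI : Subsingleton (MvPolynomial (Fin 2) R) := by
      constructor; intro a b; ext d; exact Subsingleton.elim _ _
    constructor
    · intro _; exact ⟨0, Subsingleton.elim _ _⟩
    · intro _
      constructor
      · rw [(Subsingleton.elim (f ^ p ^ m) 0)]; exact dvd_zero _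
      · rw [Subsingleton.elim (_ - _ - _) (0 : MvPolynomial (Fin 2) R)]
        exact Submodule.zero_mem _
  · rw [not_subsingleton_iff_nontrivial] at hR
    haveI : CharP R p := by
      rcases hp.eq_one_or_self_of_dvd _ (ringChar.dvd hpR) with h1 | h1
      · exact absurd h1 CharP.ringChar_ne_one
      · exact ringChar.of_eq h1
    haveI hCP : CharP (Polynomial R) p :=
      ⟨fun x => by rw [← map_natCast (Polynomial.C : R →+* Polynomial R) x,
        Polynomial.C_eq_zero, CharP.cast_eq_zero_iff R p]⟩
    haveI hCM : CharP (MvPolynomial (Fin 2) R) p :=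
      ⟨fun x => by rw [← map_natCast (MvPolynomial.C : R →+* MvPolynomial (Fin 2) R) x,
        MvPolynomial.C_eq_zero, CharP.cast_eq_zero_iff R p]⟩
    haveI : ExpChar (Polynomial R) p := ExpChar.prime hp
    haveI : ExpChar (MvPolynomial (Fin 2) R) p := ExpChar.prime hp
    have htd : ∀ g : MvPolynomial (Fin 2) R, g.totalDegree ≤ 1 →
        (Polynomial.aeval g f).totalDegree ≤ f.natDegree := by
      intro g hg
      rw [Polynomial.aeval_eq_sum_range]
      refine le_trans (MvPolynomial.totalDegree_finset_sum _ _) (Finset.sup_le ?_)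
      intro i hi
      rw [Finset.mem_range] at hi
      refine le_trans (MvPolynomial.totalDegree_smul_le _ _) ?_
      refine le_trans (MvPolynomial.totalDegree_pow _ _) ?_
      calc i * g.totalDegree ≤ i * 1 := Nat.mul_le_mul_left i hg
      _ = i := Nat.mul_one i
      _ ≤ f.natDegree := by omega
    have hX01 : (MvPolynomial.X 0 + MvPolynomial.X 1 : MvPolynomial (Fin 2) R).totalDegree ≤ 1 := by
      refine le_trans (MvPolynomial.totalDegree_add _ _) ?_
      rw [MvPolynomial.totalDegree_X, MvPolynomial.totalDegree_X]
      omega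
    constructor
    · rintro ⟨-, hmem⟩
      have hDtd : (Polynomial.aeval (MvPolynomial.X 0 + MvPolynomial.X 1 : MvPolynomial (Fin 2) R) f
          - Polynomial.aeval (MvPolynomial.X 0 : MvPolynomial (Fin 2) R) f
          - Polynomial.aeval (MvPolynomial.X 1 : MvPolynomial (Fin 2) R) f).totalDegree
          ≤ f.natDegree := by
        refine le_trans (MvPolynomial.totalDegree_sub _ _) (max_le (le_trans (MvPolynomial.totalDegree_sub _ _) (max_le ?_ ?_)) ?_)
        · exact htd _ hX01
        · exact htd _ (le_trans (MvPolynomial.totalDegree_X _).le le_rfl)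
        · exact htd _ (MvPolynomial.totalDegree_X _).le
      have hD0 : (Polynomial.aeval (MvPolynomial.X 0 + MvPolynomial.X 1 : MvPolynomial (Fin 2) R) f
          - Polynomial.aeval (MvPolynomial.X 0 : MvPolynomial (Fin 2) R) f
          - Polynomial.aeval (MvPolynomial.X 1 : MvPolynomial (Fin 2) R) f) = 0 := by
        ext d
        rw [MvPolynomial.coeff_zero]
        have hsup : ∀ i : Fin 2, d i ≤ ∑ j ∈ d.support, d j := by
          intro i
          by_cases h : d i = 0
          · simp [h]
          · exact Finset.single_le_sum (fun _ _ => Nat.zero_le _) (Finsupp.mem_support_iff.mpr h)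
        by_cases hd : d 0 < p ^ n ∧ d 1 < p ^ n
        · obtain ⟨u, v, huv⟩ := Ideal.mem_span_pair.mp hmem
          rw [← huv, MvPolynomial.coeff_add, MvPolynomial.X_pow_eq_monomial,
            MvPolynomial.X_pow_eq_monomial, MvPolynomial.coeff_mul_monomial',
            MvPolynomial.coeff_mul_monomial', if_neg, if_neg, add_zero]
          · exact fun hle => absurd (Finsupp.single_le_iff.mp hle) (by omega)
          · exact fun hle => absurd (Finsupp.single_le_iff.mp hle) (by omega)
        · apply MvPolynomial.coeff_eq_zero_of_totalDegree_lt
          refine lt_of_le_of_lt hDtd (lt_of_lt_of_le hdeg ?_)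
          rcases (by omega : p ^ n ≤ d 0 ∨ p ^ n ≤ d 1) with h | h
          · exact le_trans h (hsup 0)
          · exact le_trans h (hsup 1)
      -- transfer to R[X][X]
      set φ : MvPolynomial (Fin 2) R →ₐ[R] Polynomial (Polynomial R) :=
        MvPolynomial.aeval (fun i : Fin 2 => if i = 0
          then (Polynomial.C Polynomial.X : Polynomial (Polynomial R)) else Polynomial.X) with hφ
      have hφD := congrArg φ hD0
      rw [map_zero, map_sub, map_sub, sub_eq_zero, ← Polynomial.aeval_algHom_apply,
        ← Polynomial.aeval_algHom_apply, ← Polynomial.aeval_algHom_apply] at hφD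
      have hφ0 : φ (MvPolynomial.X 0) = Polynomial.C Polynomial.X := by simp [hφ]
      have hφ1 : φ (MvPolynomial.X 1) = Polynomial.X := by simp [hφ]
      have hφa : φ (MvPolynomial.X 0 + MvPolynomial.X 1) =
          Polynomial.C Polynomial.X + Polynomial.X := by
        rw [map_add, hφ0, hφ1]
      rw [hφa, hφ0, hφ1] at hφD
      have hCf : Polynomial.aeval (Polynomial.C Polynomial.X : Polynomial (Polynomial R)) f
          = Polynomial.C f := by
        have h1 := Polynomial.aeval_algHom_apply
          (Polynomial.CAlgHom (R := R) (A := Polynomial R)) Polynomial.X f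
        rw [Polynomial.aeval_X_left_apply] at h1
        simpa [Polynomial.CAlgHom] using h1
      have hmapf : Polynomial.aeval (Polynomial.X : Polynomial (Polynomial R)) f
          = f.map Polynomial.C := by
        rw [Polynomial.aeval_def]
        rfl
      rw [hCf, hmapf, sub_eq_iff_eq_add'] at hφD
      obtain ⟨h0, hk⟩ := myKey f hφD
      have hvanish : ∀ j, f.coeff j ≠ 0 → ∃ i : ℕ, i < n ∧ j = p ^ i := by
        intro j hj
        rcases Nat.eq_zero_or_pos j with rfl | hj1
        · exact absurd h0 hj
        by_cases hpow : ∃ i, j = p ^ i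
        · obtain ⟨i, rfl⟩ := hpow
          refine ⟨i, ?_, rfl⟩
          have h1 : p ^ i ≤ f.natDegree := Polynomial.le_natDegree_of_ne_zero hj
          exact (pow_lt_pow_iff_right₀ hp.one_lt).mp (lt_of_le_of_lt h1 hdeg)
        · push_neg at hpow
          have h2 : 2 ≤ j := by
            rcases Nat.lt_or_ge j 2 with h | h
            · have hj1' : j = 1 := by omega
              exact absurd (by rw [hj1', pow_zero]) (hpow 0)
            · exact h
          obtain ⟨a, ha0, haj, hnd⟩ := myChoose p j hp h2 hpow
          have hrel := congrArg (fun g => Polynomial.coeff g (j - a)) (hk a ha0)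
          simp only [Polynomial.hasseDeriv_coeff, Polynomial.coeff_C] at hrel
          rw [Nat.sub_add_cancel haj.le] at hrel
          rw [if_neg (by omega : ¬ j - a = 0)] at hrel
          exact absurd (((myUnit hp hnd).mul_right_eq_zero).mp hrel) hj
      refine ⟨fun i => f.coeff (p ^ (i : ℕ)), ?_⟩
      ext j
      rw [Polynomial.finset_sum_coeff]
      simp only [Polynomial.coeff_C_mul, Polynomial.coeff_X_pow]
      by_cases hj : ∃ i : Fin n, j = p ^ (i : ℕ)
      · obtain ⟨i, rfl⟩ := hj
        rw [Finset.sum_eq_single i]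
        · simp
        · intro b _ hbi
          rw [if_neg, mul_zero]
          exact fun hc => hbi (Fin.ext (Nat.pow_right_injective hp.two_le hc.symm))
        · intro h; exact absurd (Finset.mem_univ i) h
      · have hfj : f.coeff j = 0 := by
          by_contra hc
          obtain ⟨i, hin, rfl⟩ := hvanish j hc
          exact hj ⟨⟨i, hin⟩, rfl⟩
        rw [hfj]
        symm
        apply Finset.sum_eq_zero
        intro b _
        rw [if_neg, mul_zero]
        exact fun hc => hj ⟨b, hc⟩
    · rintro ⟨a, rfl⟩
      constructor
      · rw [sum_pow_char_pow]
        apply Finset.dvd_sum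
        intro i _
        rw [mul_pow, ← pow_mul]
        apply Dvd.dvd.mul_left
        apply pow_dvd_pow
        calc p ^ n ≤ p ^ m := Nat.pow_le_pow_right hp.pos hnm
        _ ≤ p ^ (i : ℕ) * p ^ m := Nat.le_mul_of_pos_left _ (pow_pos hp.pos _)
      · have hsplit : Polynomial.aeval
            (MvPolynomial.X 0 + MvPolynomial.X 1 : MvPolynomial (Fin 2) R)
            (∑ i : Fin n, Polynomial.C (a i) * Polynomial.X ^ p ^ (i : ℕ))
            = Polynomial.aeval (MvPolynomial.X 0 : MvPolynomial (Fin 2) R)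
              (∑ i : Fin n, Polynomial.C (a i) * Polynomial.X ^ p ^ (i : ℕ))
            + Polynomial.aeval (MvPolynomial.X 1 : MvPolynomial (Fin 2) R)
              (∑ i : Fin n, Polynomial.C (a i) * Polynomial.X ^ p ^ (i : ℕ)) := by
          simp only [map_sum, map_mul, map_pow, Polynomial.aeval_X, Polynomial.aeval_C,
            add_pow_char_pow, mul_add, Finset.sum_add_distrib]
        rw [hsplit, add_sub_cancel_left, sub_self]
        exact Submodule.zero_mem _
end

section
/- Let p be a prime, R a commutative ring with p = 0, and m < n positive integers. A polynomial f = a_0 X + a_1 X^p + ⋯ + a_{n-1} X^{p^{n-1}} ∈ R[X] satisfies f(X)^{p^m} = 0 in R[X]/(X^{p^n}) if and only if a_i^{p^m} = 0 for all 0 ≤ i ≤ n - m - 1 (with no condition on a_{n-m}, …, a_{n-1}). -/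
/-- For `p` prime, `R` with `p = 0`, and `0 < m < n`, the additive polynomial
`f = Σ aᵢ X^{pⁱ}` satisfies `f^{p^m} ≡ 0 mod X^{p^n}` iff `aᵢ^{p^m} = 0` for all
`0 ≤ i ≤ n - m - 1`. -/
theorem stmt3 (p : ℕ) (hp : p.Prime) (R : Type*) [CommRing R] (hpR : (p : R) = 0)
    (n m : ℕ) (hm : 0 < m) (hmn : m < n) (a : Fin n → R) :
    (Polynomial.X ^ p ^ n ∣
        (∑ i : Fin n, Polynomial.C (a i) * Polynomial.X ^ p ^ (i : ℕ)) ^ p ^ m)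
    ↔ ∀ i : Fin n, (i : ℕ) ≤ n - m - 1 → a i ^ p ^ m = 0 := by
  cases subsingleton_or_nontrivial R with
  | inl hs =>
    constructor
    · intro _ i _; exact Subsingleton.elim _ _
    · intro _
      exact ⟨0, Subsingleton.elim _ _⟩
  | inr hnt =>
    haveI : CharP R p := by
      have hd := ringChar.dvd hpR
      rcases (Nat.Prime.eq_one_or_self_of_dvd hp _ hd) with h1 | hps
      · haveI := ringChar.eq_iff.mp h1
        have : (1 : R) = 0 := by exact_mod_cast CharP.cast_eq_zero R 1
        exact absurd this one_ne_zero
      · exact hps ▸ ringChar.charP R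
    haveI : Fact p.Prime := ⟨hp⟩
    haveI : CharP (Polynomial R) p := Polynomial.instCharP p
    -- rewrite the power as a sum via Frobenius
    have hsum : (∑ i : Fin n, Polynomial.C (a i) * Polynomial.X ^ p ^ (i : ℕ)) ^ p ^ m
        = ∑ i : Fin n, Polynomial.C (a i ^ p ^ m) * Polynomial.X ^ p ^ ((i : ℕ) + m) := by
      rw [sum_pow_char_pow]
      refine Finset.sum_congr rfl fun i _ => ?_
      rw [mul_pow, ← Polynomial.C_pow, ← pow_mul, ← pow_add]
    rw [hsum, Polynomial.X_pow_dvd_iff]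
    have hinj : ∀ i j : ℕ, p ^ i = p ^ j → i = j :=
      fun i j h => Nat.pow_right_injective hp.two_le h
    constructor
    · intro h i hi
      have hlt : p ^ ((i : ℕ) + m) < p ^ n :=
        Nat.pow_lt_pow_right hp.one_lt (by omega)
      have := h (p ^ ((i : ℕ) + m)) hlt
      rw [Polynomial.finset_sum_coeff] at this
      simp only [Polynomial.coeff_C_mul, Polynomial.coeff_X_pow] at this
      rw [Finset.sum_eq_single i] at this
      · simpa using this
      · intro j _ hji
        have hne : p ^ ((i : ℕ) + m) ≠ p ^ ((j : ℕ) + m) := by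
          intro he
          exact hji (Fin.ext (by have := hinj _ _ he.symm; omega)).symm
        simp [hne]
      · simp
    · intro h d hd
      rw [Polynomial.finset_sum_coeff]
      refine Finset.sum_eq_zero fun i _ => ?_
      simp only [Polynomial.coeff_C_mul, Polynomial.coeff_X_pow]
      by_cases he : d = p ^ ((i : ℕ) + m)
      · subst he
        have hlt : (i : ℕ) + m < n := by
          by_contra hge
          exact absurd hd (not_lt.mpr (Nat.pow_le_pow_right hp.one_lt.le (by omega)))
        rw [h i (by omega)]
        simp
      · simp [he]
end

section
/- Let p be a prime, k a field of characteristic p, and n_1, …, n_r positive integers. A polynomial F ∈ k[X_1, …, X_r] with deg_{X_j} F < p^{n_j} for each j is additive in each variable separately (i.e. for each j, F(X_1,…,X_j + Y_j,…,X_r) = F(…,X_j,…) + F(…,Y_j,…) as polynomials) if and only if F = Σ a_{i_1,…,i_r} X_1^{p^{i_1}} ⋯ X_r^{p^{i_r}}, where the sum runs over tuples with 0 ≤ i_j ≤ n_j − 1. Consequently the k-vector space of such multi-additive polynomials has dimension n_1 n_2 ⋯ n_r. -/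
open MvPolynomial

section Aux

variable {p : ℕ} {k : Type*} [Field k]

private lemma pow_eq_of_add_pow (hp : p.Prime) [CharP k p] :
    ∀ M : ℕ, 1 ≤ M → ((Polynomial.X + 1 : Polynomial k) ^ M = Polynomial.X ^ M + 1) →
      ∃ i, M = p ^ i := by
  have hfact : Fact p.Prime := ⟨hp⟩
  intro M
  induction M using Nat.strong_induction_on with
  | _ M ih =>
    intro hM h
    rcases eq_or_lt_of_le hM with h1 | h2
    · exact ⟨0, by rw [pow_zero]; omega⟩
    · have hco := congrArg (fun q => Polynomial.coeff q 1) h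
      simp only [Polynomial.coeff_X_add_one_pow, Polynomial.coeff_add,
        Polynomial.coeff_X_pow, Polynomial.coeff_one] at hco
      rw [if_neg (by omega), if_neg (by omega), Nat.choose_one_right, add_zero] at hco
      have hdvd : p ∣ M := (CharP.cast_eq_zero_iff k p M).mp (by exact_mod_cast hco)
      obtain ⟨M', rfl⟩ := hdvd
      have hp2 := hp.two_le
      have hM' : 1 ≤ M' := Nat.pos_of_ne_zero fun h0 => by simp [h0] at hM
      have hMlt : M' < p * M' := by nlinarith
      have e1 : ((Polynomial.X + 1 : Polynomial k) ^ M') ^ p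
          = ((Polynomial.X ^ M' + 1 : Polynomial k)) ^ p := by
        rw [add_pow_char (Polynomial.X ^ M') 1 p, one_pow, ← pow_mul, ← pow_mul,
          mul_comm M' p, h]
      have e2 : ((Polynomial.X + 1 : Polynomial k) ^ M' - (Polynomial.X ^ M' + 1)) ^ p = 0 := by
        rw [sub_pow_char, e1, sub_self]
      have e3 : ((Polynomial.X + 1 : Polynomial k) ^ M' = Polynomial.X ^ M' + 1) :=
        sub_eq_zero.mp ((pow_eq_zero_iff hp.pos.ne').mp e2)
      obtain ⟨i, hi⟩ := ih M' hMlt hM' e3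
      exact ⟨i + 1, by rw [hi, pow_succ']⟩

private lemma pow_eq_of_choose (hp : p.Prime) [CharP k p] (M : ℕ) (hM : 1 ≤ M)
    (h : ∀ t, 0 < t → t < M → ((M.choose t : k) = 0)) : ∃ i, M = p ^ i := by
  apply pow_eq_of_add_pow (k := k) hp M hM
  ext s
  simp only [Polynomial.coeff_X_add_one_pow, Polynomial.coeff_add, Polynomial.coeff_X_pow,
    Polynomial.coeff_one]
  rcases lt_trichotomy s M with hlt | rfl | hgt
  · rcases Nat.eq_zero_or_pos s with rfl | hs
    · rw [Nat.choose_zero_right, if_neg (by omega), if_pos rfl]; simp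
    · rw [h s hs hlt, if_neg (by omega), if_neg (by omega)]; simp
  · rw [Nat.choose_self, if_pos rfl, if_neg (by omega)]; simp
  · rw [Nat.choose_eq_zero_of_lt hgt, if_neg (by omega), if_neg (by omega)]; simp

end Aux

section Main

variable {p : ℕ} {k : Type*} [Field k] [CharP k p]

private lemma aeval_factored {r : ℕ} (F : MvPolynomial (Fin r) k) (j : Fin r)
    (w : Polynomial (MvPolynomial (Fin r) k)) :
    aeval (fun i => Polynomial.C (X i : MvPolynomial (Fin r) k) * (if i = j then w else 1)) F
      = ∑ m ∈ F.support, Polynomial.C ((monomial m) (coeff m F)) * w ^ (m j) := by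
  conv_lhs => rw [F.as_sum, map_sum]
  refine Finset.sum_congr rfl fun m hm => ?_
  rw [aeval_monomial, Finsupp.prod_fintype _ _ (fun i => pow_zero _)]
  have key : ∀ i : Fin r,
      (Polynomial.C (X i : MvPolynomial (Fin r) k) * (if i = j then w else 1)) ^ m i
      = Polynomial.C ((X i : MvPolynomial (Fin r) k) ^ m i) * (if i = j then w ^ m i else 1) := by
    intro i
    by_cases hij : i = j <;> simp [hij, mul_pow]
  rw [Finset.prod_congr rfl fun i _ => key i, Finset.prod_mul_distrib, ← map_prod,
    Finset.prod_ite_eq' Finset.univ j (fun i => w ^ m i)]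
  simp only [Finset.mem_univ, if_true]
  rw [monomial_eq, Finsupp.prod_fintype _ _ (fun i => pow_zero _), Polynomial.algebraMap_apply,
    MvPolynomial.algebraMap_eq, map_mul]
  ring

private lemma support_pow_of_additive {r : ℕ} (hp : p.Prime) (F : MvPolynomial (Fin r) k)
    (j : Fin r)
    (h : aeval (fun i => if i = j then X (some j) + X none
          else (X (some i) : MvPolynomial (Option (Fin r)) k)) F
        = rename some F
          + aeval (fun i => if i = j then X none
              else (X (some i) : MvPolynomial (Option (Fin r)) k)) F)
    (m : Fin r →₀ ℕ) (hm : m ∈ F.support) : ∃ i, m j = p ^ i := by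
  classical
  set Φ : MvPolynomial (Option (Fin r)) k →ₐ[k] Polynomial (MvPolynomial (Fin r) k) :=
    aeval (fun o => Option.elim o (Polynomial.C (X j) * Polynomial.X)
      (fun i => Polynomial.C (X i))) with hΦ
  have h' := congrArg Φ h
  rw [map_add, comp_aeval_apply, comp_aeval_apply,
    show (rename some F : MvPolynomial (Option (Fin r)) k) = aeval (X ∘ some) F from by rw [rename_eq_aeval],
    comp_aeval_apply] at h'
  have e1 : (fun i => Φ (if i = j then X (some j) + X none else X (some i)))
      = fun i => Polynomial.C (X i : MvPolynomial (Fin r) k) * (if i = j then (1 + Polynomial.X) else 1) := by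
    funext i
    by_cases hij : i = j <;> simp [hΦ, hij] <;> ring
  have e2 : (fun i => Φ ((X ∘ some) i))
      = fun i => Polynomial.C (X i : MvPolynomial (Fin r) k) * (if i = j then (1 : Polynomial (MvPolynomial (Fin r) k)) else 1) := by
    funext i; simp [hΦ]
  have e3 : (fun i => Φ (if i = j then X none else X (some i)))
      = fun i => Polynomial.C (X i : MvPolynomial (Fin r) k) * (if i = j then Polynomial.X
          else (1 : Polynomial (MvPolynomial (Fin r) k))) := by
    funext i
    by_cases hij : i = j <;> simp [hΦ, hij]
  rw [e1, e2, e3, aeval_factored, aeval_factored, aeval_factored] at h'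
  have comp : ∀ (t : ℕ) (w : Polynomial (MvPolynomial (Fin r) k)) (c : ℕ → k)
      (_ : ∀ s : ℕ, (w ^ s).coeff t = C (c s)),
      MvPolynomial.coeff m (Polynomial.coeff
        (∑ m' ∈ F.support, Polynomial.C ((monomial m') (coeff m' F)) * w ^ (m' j)) t)
        = coeff m F * c (m j) := by
    intro t w c hw
    rw [Polynomial.finset_sum_coeff, Finset.sum_congr rfl
      (fun m' _ => by rw [Polynomial.coeff_C_mul, hw]), coeff_sum]
    rw [Finset.sum_eq_single m (fun m' _ hne => by
        rw [mul_comm, coeff_C_mul, coeff_monomial, if_neg hne, mul_zero])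
      (fun hns => absurd hm hns)]
    rw [mul_comm, coeff_C_mul, coeff_monomial, if_pos rfl, mul_comm]
  have key : ∀ t : ℕ, coeff m F * ((m j).choose t : k)
      = coeff m F * (if t = 0 then 1 else 0) + coeff m F * (if t = m j then 1 else 0) := by
    intro t
    have h3 := congrArg (fun q => MvPolynomial.coeff m (Polynomial.coeff q t)) h'
    simp only [Polynomial.coeff_add, coeff_add] at h3
    rw [comp t (1 + Polynomial.X) (fun s => ((s.choose t : k)))
        (fun s => by rw [Polynomial.coeff_one_add_X_pow]; exact (C_eq_coe_nat _).symm),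
      comp t 1 (fun _ => if t = 0 then 1 else 0)
        (fun s => by rw [one_pow, Polynomial.coeff_one]; split_ifs <;> simp_all),
      comp t Polynomial.X (fun s => if t = s then 1 else 0)
        (fun s => by rw [Polynomial.coeff_X_pow]; split_ifs <;> simp_all)] at h3
    exact h3
  have hc : coeff m F ≠ 0 := mem_support_iff.mp hm
  have hne0 : m j ≠ 0 := by
    intro h0
    have k0 := key 0
    rw [Nat.choose_zero_right, Nat.cast_one, mul_one, if_pos rfl, mul_one, h0, if_pos rfl,
      mul_one, left_eq_add] at k0
    exact hc k0
  have hchoose : ∀ t, 0 < t → t < m j → ((m j).choose t : k) = 0 := by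
    intro t ht htm
    have kt := key t
    rw [if_neg (by omega), if_neg (by omega), mul_zero, add_zero] at kt
    rcases mul_eq_zero.mp kt with h0 | h0
    · exact absurd h0 hc
    · exact h0
  exact pow_eq_of_choose (k := k) hp (m j) (by omega) hchoose

private lemma additive_of_support_pow {r : ℕ} (hp : p.Prime) (F : MvPolynomial (Fin r) k)
    (j : Fin r) (hF : ∀ m ∈ F.support, ∃ i : ℕ, m j = p ^ i) :
    aeval (fun i => if i = j then X (some j) + X none
          else (X (some i) : MvPolynomial (Option (Fin r)) k)) F
        = rename some F
          + aeval (fun i => if i = j then X none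
              else (X (some i) : MvPolynomial (Option (Fin r)) k)) F := by
  classical
  haveI : Fact p.Prime := ⟨hp⟩
  have hrename : (rename some F : MvPolynomial (Option (Fin r)) k)
      = aeval (fun i => if i = j then X (some j) else X (some i)) F := by
    have hfun : (fun i => if i = j then (X (some j) : MvPolynomial (Option (Fin r)) k)
        else X (some i)) = (X ∘ some) := by
      funext i; by_cases hij : i = j <;> simp [hij]
    rw [hfun, rename_eq_aeval]
  rw [hrename]
  conv_lhs => rw [F.as_sum, map_sum]
  conv_rhs => rw [F.as_sum, map_sum, map_sum]
  rw [← Finset.sum_add_distrib]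
  refine Finset.sum_congr rfl fun m hm => ?_
  obtain ⟨N, hN⟩ := hF m hm
  have gen : ∀ V : MvPolynomial (Option (Fin r)) k,
      aeval (fun i => if i = j then V else X (some i)) (monomial m (coeff m F))
        = algebraMap k _ (coeff m F) * (V ^ (m j)
            * ∏ i ∈ Finset.univ.erase j, (X (some i) : MvPolynomial (Option (Fin r)) k) ^ m i) := by
    intro V
    rw [aeval_monomial, Finsupp.prod_fintype _ _ (fun i => pow_zero _)]
    congr 1
    rw [← Finset.mul_prod_erase Finset.univ _ (Finset.mem_univ j), if_pos rfl]
    congr 1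
    exact Finset.prod_congr rfl fun i hi => by rw [if_neg (Finset.ne_of_mem_erase hi)]
  rw [gen, gen, gen, hN, add_pow_char_pow]
  ring

end Main

/-- Over a field `k` of characteristic `p`, a polynomial `F ∈ k[X_1,…,X_r]` with
`deg_{X_j} F < p^{n_j}` is additive in each variable separately iff it is of the form
`Σ a_{i_1,…,i_r} X_1^{p^{i_1}} ⋯ X_r^{p^{i_r}}` with `0 ≤ i_j ≤ n_j - 1`.
Additivity in the `j`-th variable is expressed by introducing an extra variable
(`none` in `Option (Fin r)`) playing the role of `Y_j`. -/
theorem stmt4 (p : ℕ) (hp : p.Prime) (k : Type*) [Field k] [CharP k p]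
    (r : ℕ) (n : Fin r → ℕ) (hn : ∀ j, 0 < n j)
    (F : MvPolynomial (Fin r) k) (hdeg : ∀ j, F.degreeOf j < p ^ n j) :
    (∀ j : Fin r,
      aeval (fun i => if i = j then X (some j) + X none
          else (X (some i) : MvPolynomial (Option (Fin r)) k)) F
        = rename some F
          + aeval (fun i => if i = j then X none
              else (X (some i) : MvPolynomial (Option (Fin r)) k)) F)
    ↔ ∃ a : (∀ j, Fin (n j)) → k,
        F = ∑ ι : ∀ j, Fin (n j), C (a ι) * ∏ j, X j ^ p ^ (ι j : ℕ) := by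
  classical
  haveI : Fact p.Prime := ⟨hp⟩
  set e : (∀ j, Fin (n j)) → (Fin r →₀ ℕ) :=
    fun ι => Finsupp.equivFunOnFinite.symm (fun j => p ^ (ι j : ℕ)) with he
  have hej : ∀ ι j, e ι j = p ^ (ι j : ℕ) := fun ι j => by simp [he]
  have hmon : ∀ (ι : ∀ j, Fin (n j)) (c : k),
      C c * ∏ j, (X j : MvPolynomial (Fin r) k) ^ p ^ (ι j : ℕ) = monomial (e ι) c := by
    intro ι c
    rw [monomial_eq, Finsupp.prod_fintype _ _ (fun i => pow_zero _)]
    all_goals exact congrArg (C c * ·) (Finset.prod_congr rfl fun i _ => by rw [hej])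
  have heinj : Function.Injective e := by
    intro ι ι' hee
    funext j
    have h1 := DFunLike.congr_fun hee j
    rw [hej, hej] at h1
    exact Fin.ext (Nat.pow_right_injective hp.two_le h1)
  constructor
  · intro h
    refine ⟨fun ι => coeff (e ι) F, ?_⟩
    rw [show (∑ ι : ∀ j, Fin (n j), C (coeff (e ι) F) * ∏ j, (X j : MvPolynomial (Fin r) k) ^ p ^ (ι j : ℕ))
        = ∑ ι : ∀ j, Fin (n j), monomial (e ι) (coeff (e ι) F)
      from Finset.sum_congr rfl fun ι _ => hmon ι _]
    apply MvPolynomial.ext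
    intro d
    rw [coeff_sum]
    by_cases hd : ∃ ι, e ι = d
    · obtain ⟨ι₀, rfl⟩ := hd
      rw [Finset.sum_eq_single ι₀
        (fun ι _ hne => by rw [coeff_monomial, if_neg (fun hh => hne (heinj hh))])
        (fun hns => absurd (Finset.mem_univ ι₀) hns), coeff_monomial, if_pos rfl]
    · rw [Finset.sum_eq_zero (fun ι _ => by rw [coeff_monomial, if_neg (fun hh => hd ⟨ι, hh⟩)])]
      by_contra hne
      have hdm : d ∈ F.support := mem_support_iff.mpr hne
      choose i hi using fun j => support_pow_of_additive hp F j (h j) d hdm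
      have hb : ∀ j, i j < n j := by
        intro j
        have h1 : d j ≤ F.degreeOf j := monomial_le_degreeOf j hdm
        have h2 : p ^ i j < p ^ n j := lt_of_le_of_lt (hi j ▸ h1) (hdeg j)
        exact (Nat.pow_lt_pow_iff_right hp.one_lt).mp h2
      exact hd ⟨fun j => ⟨i j, hb j⟩, Finsupp.ext fun j => by rw [hej]; exact (hi j).symm⟩
  · rintro ⟨a, rfl⟩ j
    apply additive_of_support_pow hp
    intro m hm
    rw [show (∑ ι : ∀ j, Fin (n j), C (a ι) * ∏ j, (X j : MvPolynomial (Fin r) k) ^ p ^ (ι j : ℕ))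
        = ∑ ι : ∀ j, Fin (n j), monomial (e ι) (a ι)
      from Finset.sum_congr rfl fun ι _ => hmon ι _] at hm
    have hc : coeff m (∑ ι : ∀ j, Fin (n j), monomial (e ι) (a ι)) ≠ 0 := mem_support_iff.mp hm
    rw [coeff_sum] at hc
    by_contra hno
    apply hc
    apply Finset.sum_eq_zero
    intro ι _
    rw [coeff_monomial, if_neg]
    exact fun heq => hno ⟨(ι j : ℕ), (DFunLike.congr_fun heq j).symm.trans (hej ι j)⟩
end

section
/- Let p be an odd prime, k a field of characteristic p, and n, r positive integers. The k-vector space of polynomials F = Σ_{0 ≤ i_1,…,i_r ≤ n-1} a_{i_1,…,i_r} X_1^{p^{i_1}} ⋯ X_r^{p^{i_r}} that are antisymmetric (a_{i_{σ(1)},…,i_{σ(r)}} = sgn(σ) · a_{i_1,…,i_r} for all σ ∈ S_r) has dimension binom(n, r), with the convention binom(n,r) = 0 for r > n. -/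
open MvPolynomial

namespace Stmt6Aux

/-- The exponent finsupp of the monomial `∏ j, X j ^ p ^ (ι j)`. -/
noncomputable def D (p n r : ℕ) (ι : Fin r → Fin n) : Fin r →₀ ℕ :=
  ∑ j, Finsupp.single j (p ^ (ι j : ℕ))

lemma D_apply {p n r : ℕ} (ι : Fin r → Fin n) (j : Fin r) :
    D p n r ι j = p ^ (ι j : ℕ) := by
  classical
  simp [D, Finsupp.finset_sum_apply, Finsupp.single_apply]

lemma D_injective {p n r : ℕ} (hp2 : 2 ≤ p) : Function.Injective (D p n r) := by
  intro ι ι' h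
  funext j
  have h1 : D p n r ι j = D p n r ι' j := by rw [h]
  rw [D_apply, D_apply] at h1
  exact Fin.val_injective (Nat.pow_right_injective hp2 h1)

lemma mapDomain_D {p n r : ℕ} (ι : Fin r → Fin n) (τ : Equiv.Perm (Fin r)) :
    Finsupp.mapDomain (⇑τ) (D p n r ι) = D p n r (ι ∘ ⇑τ⁻¹) := by
  ext j
  rw [Finsupp.mapDomain_equiv_apply, D_apply, D_apply]
  rfl

lemma prod_monomial_single {k : Type*} [CommSemiring k] {r : ℕ} (e : Fin r → ℕ) :
    ∏ j, (X j : MvPolynomial (Fin r) k) ^ e j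
      = monomial (∑ j, Finsupp.single j (e j)) 1 := by
  classical
  have : ∀ s : Finset (Fin r), ∏ j ∈ s, (X j : MvPolynomial (Fin r) k) ^ e j
      = monomial (∑ j ∈ s, Finsupp.single j (e j)) 1 := by
    intro s
    induction s using Finset.cons_induction with
    | empty => simp
    | cons a s ha ih =>
      rw [Finset.prod_cons, Finset.sum_cons, ih, X_pow_eq_monomial, monomial_mul, one_mul]
  exact this Finset.univ

end Stmt6Aux

open Stmt6Aux

set_option maxHeartbeats 3000000 in
/-- Over a field `k` of odd characteristic `p`, the space of antisymmetric polynomials of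
the form `Σ a_{i_1,…,i_r} X_1^{p^{i_1}} ⋯ X_r^{p^{i_r}}` (`0 ≤ i_j ≤ n-1`), i.e. those
with `rename σ F = sgn(σ) • F` for all `σ ∈ S_r`, has dimension `binom(n, r)`
(which is `0` when `r > n`). -/
theorem stmt6 (p : ℕ) (hp : p.Prime) (hodd : Odd p) (k : Type*) [Field k] [CharP k p]
    (n r : ℕ) (hn : 0 < n) (hr : 0 < r) :
    Module.finrank k
      ↥(Submodule.span k (Set.range fun ι : Fin r → Fin n =>
            ∏ j, (X j : MvPolynomial (Fin r) k) ^ p ^ (ι j : ℕ))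
        ⊓ ⨅ σ : Equiv.Perm (Fin r),
            LinearMap.ker ((rename (σ : Fin r → Fin r)).toLinearMap
              - ((Equiv.Perm.sign σ : ℤ) : k) •
                  (LinearMap.id : MvPolynomial (Fin r) k →ₗ[k] MvPolynomial (Fin r) k)))
      = Nat.choose n r := by
  classical
  have hp2 : 2 ≤ p := hp.two_le
  -- sign as an element of k
  set c : Equiv.Perm (Fin r) → k := fun σ => ((Equiv.Perm.sign σ : ℤ) : k) with hc
  have hc_mul : ∀ σ τ, c (σ * τ) = c σ * c τ := by
    intro σ τ
    simp [hc, ← Int.cast_mul, ← Units.val_mul]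
  have hc_one : c 1 = 1 := by simp [hc]
  have hc_inv : ∀ σ, c σ⁻¹ = c σ := by intro σ; simp [hc]
  have hc_sq : ∀ σ, c σ * c σ = 1 := by
    intro σ
    rw [hc, ← Int.cast_mul, ← Units.val_mul, Int.units_mul_self]
    simp
  -- the monomials
  set m' : (Fin r → Fin n) → MvPolynomial (Fin r) k :=
    fun ι => monomial (D p n r ι) 1 with hm'
  have hgen : (fun ι : Fin r → Fin n =>
      ∏ j, (X j : MvPolynomial (Fin r) k) ^ p ^ (ι j : ℕ)) = m' := by
    funext ι
    rw [hm', prod_monomial_single]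
    rfl
  -- the index type : subsets of size r
  set T := {t : Finset (Fin n) // t.card = r} with hT
  set emb : T → (Fin r → Fin n) := fun t => ⇑(t.1.orderEmbOfFin t.2) with hemb
  have hemb_mono : ∀ t, StrictMono (emb t) := fun t => (t.1.orderEmbOfFin t.2).strictMono
  have huniq : ∀ {s s' : Fin r → Fin n}, StrictMono s → StrictMono s' →
      ∀ {σ σ' : Equiv.Perm (Fin r)}, s ∘ ⇑σ = s' ∘ ⇑σ' → s = s' ∧ σ = σ' := by
    intro s s' hs hs' σ σ' h
    have hrange : Set.range s = Set.range s' := by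
      rw [← σ.surjective.range_comp s, h, σ'.surjective.range_comp]
    have hcard : (Finset.image s Finset.univ).card = r := by
      rw [Finset.card_image_of_injective _ hs.injective, Finset.card_univ, Fintype.card_fin]
    have h1 : s = (Finset.image s Finset.univ).orderEmbOfFin hcard :=
      Finset.orderEmbOfFin_unique hcard (fun x => Finset.mem_image_of_mem _ (Finset.mem_univ x)) hs
    have h2 : s' = (Finset.image s Finset.univ).orderEmbOfFin hcard :=
      Finset.orderEmbOfFin_unique hcard (fun x => by
        have hx : s' x ∈ Set.range s := hrange ▸ Set.mem_range_self x
        obtain ⟨y, hy⟩ := hx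
        exact hy ▸ Finset.mem_image_of_mem _ (Finset.mem_univ y)) hs'
    have hss : s = s' := h1.trans h2.symm
    subst hss
    refine ⟨rfl, Equiv.ext fun j => hs.injective (congrFun h j)⟩
  have hemb_inj : ∀ {t t' : T}, emb t = emb t' → t = t' := by
    intro t t' h
    apply Subtype.ext
    rw [← Finset.coe_inj, ← Finset.range_orderEmbOfFin t.1 t.2,
      ← Finset.range_orderEmbOfFin t'.1 t'.2]
    exact congrArg Set.range h
  have hfact : ∀ {ι : Fin r → Fin n}, Function.Injective ι →
      ∃ (t : T) (σ : Equiv.Perm (Fin r)), emb t ∘ ⇑σ = ι := by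
    intro ι hι
    have hcard : (Finset.image ι Finset.univ).card = r := by
      rw [Finset.card_image_of_injective _ hι, Finset.card_univ, Fintype.card_fin]
    set t : Finset (Fin n) := Finset.image ι Finset.univ with ht
    have hmem : ∀ j, ι j ∈ t := fun j => Finset.mem_image_of_mem _ (Finset.mem_univ j)
    set f : Fin r → Fin r := fun j => (t.orderIsoOfFin hcard).symm ⟨ι j, hmem j⟩ with hf
    have hfinj : Function.Injective f := by
      intro a b hab
      apply hι
      have := congrArg (fun x => ((t.orderIsoOfFin hcard) x : Fin n)) hab
      simpa [hf] using this
    obtain ⟨hfinj', hfsurj⟩ := (Finite.injective_iff_bijective.mp hfinj)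
    refine ⟨⟨t, hcard⟩, Equiv.ofBijective f ⟨hfinj', hfsurj⟩, funext fun j => ?_⟩
    show (⟨t, hcard⟩ : T).1.orderEmbOfFin _ (f j) = ι j
    rw [← Finset.coe_orderIsoOfFin_apply, hf]
    simp
  -- the alternating sums
  set bb : T → MvPolynomial (Fin r) k :=
    fun t => ∑ σ : Equiv.Perm (Fin r), c σ • m' (emb t ∘ ⇑σ) with hbb
  -- coefficients
  have hcoeff_m : ∀ (ι : Fin r → Fin n) (d : Fin r →₀ ℕ),
      coeff d (m' ι) = if D p n r ι = d then 1 else 0 := by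
    intro ι d
    rw [hm', coeff_monomial]
  have hcoeff_b : ∀ (t : T) (d : Fin r →₀ ℕ),
      coeff d (bb t) = ∑ σ : Equiv.Perm (Fin r),
        c σ * (if D p n r (emb t ∘ ⇑σ) = d then 1 else 0) := by
    intro t d
    rw [hbb, coeff_sum]
    refine Finset.sum_congr rfl fun σ _ => ?_
    rw [coeff_smul, hcoeff_m, smul_eq_mul]
  have hDeq : ∀ {ι ι' : Fin r → Fin n}, (D p n r ι = D p n r ι') ↔ ι = ι' :=
    fun {ι ι'} => (D_injective hp2).eq_iff
  have hcoeff_b_emb : ∀ t t' : T, coeff (D p n r (emb t')) (bb t) = if t = t' then 1 else 0 := by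
    intro t t'
    rw [hcoeff_b]
    by_cases h : t = t'
    · subst h
      have key : ∀ σ : Equiv.Perm (Fin r), (D p n r (emb t ∘ ⇑σ) = D p n r (emb t)) ↔ σ = 1 := by
        intro σ
        rw [hDeq]
        constructor
        · intro hh
          exact (huniq (hemb_mono t) (hemb_mono t)
            (show emb t ∘ ⇑σ = emb t ∘ ⇑(1 : Equiv.Perm (Fin r)) by simpa using hh)).2
        · rintro rfl; simp
      simp only [key]
      rw [Finset.sum_eq_single (1 : Equiv.Perm (Fin r))
        (fun b _ hb => by rw [if_neg hb, mul_zero])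
        (fun h' => absurd (Finset.mem_univ _) h')]
      simp [hc_one]
    · have key : ∀ σ : Equiv.Perm (Fin r), ¬(D p n r (emb t ∘ ⇑σ) = D p n r (emb t')) := by
        intro σ hh
        rw [hDeq] at hh
        exact h (hemb_inj (huniq (hemb_mono t) (hemb_mono t')
          (show emb t ∘ ⇑σ = emb t' ∘ ⇑(1 : Equiv.Perm (Fin r)) by simpa using hh)).1)
      have hz0 : ∀ σ ∈ (Finset.univ : Finset (Equiv.Perm (Fin r))),
          c σ * (if D p n r (emb t ∘ ⇑σ) = D p n r (emb t') then (1 : k) else 0) = 0 :=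
        fun σ _ => by rw [if_neg (key σ), mul_zero]
      rw [Finset.sum_eq_zero hz0, if_neg h]
  -- linear independence
  have hli : LinearIndependent k bb := by
    rw [Fintype.linearIndependent_iff]
    intro g hg t
    have := congrArg (coeff (D p n r (emb t))) hg
    rw [coeff_sum] at this
    simp only [coeff_smul, hcoeff_b_emb, smul_eq_mul, mul_ite, mul_one, mul_zero,
      coeff_zero] at this
    rwa [Finset.sum_ite_eq' Finset.univ t g, if_pos (Finset.mem_univ t)] at this
  -- membership of bb in the two submodules
  have hK_mem : ∀ {F : MvPolynomial (Fin r) k},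
      (F ∈ ⨅ σ : Equiv.Perm (Fin r),
        LinearMap.ker ((rename (σ : Fin r → Fin r)).toLinearMap
          - ((Equiv.Perm.sign σ : ℤ) : k) •
              (LinearMap.id : MvPolynomial (Fin r) k →ₗ[k] MvPolynomial (Fin r) k)))
        ↔ ∀ σ : Equiv.Perm (Fin r), rename (⇑σ) F = c σ • F := by
    intro F
    rw [Submodule.mem_iInf]
    refine forall_congr' fun σ => ?_
    rw [LinearMap.mem_ker, LinearMap.sub_apply, LinearMap.smul_apply, LinearMap.id_apply,
      sub_eq_zero]
    rfl
  have hrename_m : ∀ (ι : Fin r → Fin n) (τ : Equiv.Perm (Fin r)),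
      rename (⇑τ) (m' ι) = m' (ι ∘ ⇑τ⁻¹) := by
    intro ι τ
    rw [hm', rename_monomial, mapDomain_D]
  have hbK : ∀ (t : T) (τ : Equiv.Perm (Fin r)), rename (⇑τ) (bb t) = c τ • bb t := by
    intro t τ
    rw [hbb, map_sum, Finset.smul_sum]
    simp only [map_smul, hrename_m]
    refine Fintype.sum_equiv (Equiv.mulRight τ⁻¹) _ _ fun σ => ?_
    simp only [Equiv.coe_mulRight]
    have hfun : (emb t ∘ ⇑σ) ∘ ⇑τ⁻¹ = emb t ∘ ⇑(σ * τ⁻¹) := by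
      funext j
      simp [Equiv.Perm.coe_mul]
    rw [hfun, smul_smul]
    congr 1
    rw [hc_mul, hc_inv, mul_comm (c σ) (c τ), ← mul_assoc, hc_sq, one_mul]
  -- now prove the submodule equals the span of bb
  set V := Submodule.span k (Set.range fun ι : Fin r → Fin n =>
      ∏ j, (X j : MvPolynomial (Fin r) k) ^ p ^ (ι j : ℕ)) with hV
  set K := ⨅ σ : Equiv.Perm (Fin r),
      LinearMap.ker ((rename (σ : Fin r → Fin r)).toLinearMap
        - ((Equiv.Perm.sign σ : ℤ) : k) •
            (LinearMap.id : MvPolynomial (Fin r) k →ₗ[k] MvPolynomial (Fin r) k)) with hK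
  have hVm : V = Submodule.span k (Set.range m') := by rw [hV, hgen]
  have hbV : ∀ t, bb t ∈ V := by
    intro t
    rw [hVm, hbb]
    exact Submodule.sum_mem _ fun σ _ =>
      Submodule.smul_mem _ _ (Submodule.subset_span ⟨emb t ∘ ⇑σ, rfl⟩)
  have h2ne : (2 : k) ≠ 0 := by
    intro h20
    have hdvd : p ∣ 2 := (CharP.cast_eq_zero_iff k p 2).mp h20
    have hpeq : p = 2 := (Nat.prime_dvd_prime_iff_eq hp Nat.prime_two).mp hdvd
    obtain ⟨m, hm⟩ := hodd
    omega
  have hWspan : V ⊓ K = Submodule.span k (Set.range bb) := by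
    apply le_antisymm
    · rintro F ⟨hFV, hFK⟩
      have hF2 : ∀ σ : Equiv.Perm (Fin r), rename (⇑σ) F = c σ • F := hK_mem.mp hFK
      have star : ∀ (ι : Fin r → Fin n) (τ : Equiv.Perm (Fin r)),
          c τ * coeff (D p n r (ι ∘ ⇑τ⁻¹)) F = coeff (D p n r ι) F := by
        intro ι τ
        have h1 := coeff_rename_mapDomain (⇑τ) τ.injective F (D p n r ι)
        rw [mapDomain_D, hF2 τ, coeff_smul, smul_eq_mul] at h1
        exact h1
      have hFsupp : ∀ d : Fin r →₀ ℕ, (∀ ι, D p n r ι ≠ d) → coeff d F = 0 := by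
        intro d hd
        have hFV' : F ∈ Submodule.span k (Set.range m') := hVm ▸ hFV
        refine Submodule.span_induction ?_ ?_ ?_ ?_ hFV'
        · rintro x ⟨ι, rfl⟩
          rw [hcoeff_m, if_neg (hd ι)]
        · simp
        · intro x y _ _ hx hy
          rw [coeff_add, hx, hy, add_zero]
        · intro a x _ hx
          rw [coeff_smul, hx, smul_zero]
      have key : F = ∑ t : T, coeff (D p n r (emb t)) F • bb t := by
        apply MvPolynomial.ext
        intro d
        rw [coeff_sum]
        simp only [coeff_smul, smul_eq_mul]
        by_cases hd : ∃ ι, D p n r ι = d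
        · obtain ⟨ι, rfl⟩ := hd
          by_cases hι : Function.Injective ι
          · obtain ⟨t₀, σ₀, hfac⟩ := hfact hι
            have hstar := star (emb t₀) σ₀⁻¹
            rw [hc_inv, inv_inv, hfac] at hstar
            -- hstar : c σ₀ * coeff (D ι) F = coeff (D (emb t₀)) F
            have hval : coeff (D p n r ι) F = c σ₀ * coeff (D p n r (emb t₀)) F := by
              rw [← hstar, ← mul_assoc, hc_sq, one_mul]
            have hcond : ∀ (t : T) (σ : Equiv.Perm (Fin r)),
                (D p n r (emb t ∘ ⇑σ) = D p n r ι) ↔ (t = t₀ ∧ σ = σ₀) := by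
              intro t σ
              rw [hDeq]
              constructor
              · intro hh
                rw [← hfac] at hh
                obtain ⟨h1, h2⟩ := huniq (hemb_mono t) (hemb_mono t₀) hh
                exact ⟨hemb_inj h1, h2⟩
              · rintro ⟨rfl, rfl⟩
                exact hfac
            have hbbι : ∀ t : T, coeff (D p n r ι) (bb t) = if t = t₀ then c σ₀ else 0 := by
              intro t
              rw [hcoeff_b]
              by_cases ht : t = t₀
              · subst ht
                have key : ∀ σ : Equiv.Perm (Fin r),
                    (D p n r (emb t ∘ ⇑σ) = D p n r ι) ↔ σ = σ₀ := by
                  intro σ; rw [hcond t σ]; simp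
                simp only [key]
                rw [Finset.sum_eq_single σ₀
                  (fun b _ hb => by rw [if_neg hb, mul_zero])
                  (fun h' => absurd (Finset.mem_univ _) h')]
                simp
              · have key : ∀ σ : Equiv.Perm (Fin r), ¬(D p n r (emb t ∘ ⇑σ) = D p n r ι) :=
                  fun σ hh => ht ((hcond t σ).mp hh).1
                have hz0 : ∀ σ ∈ (Finset.univ : Finset (Equiv.Perm (Fin r))),
                    c σ * (if D p n r (emb t ∘ ⇑σ) = D p n r ι then (1 : k) else 0) = 0 :=
                  fun σ _ => by rw [if_neg (key σ), mul_zero]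
                rw [Finset.sum_eq_zero hz0, if_neg ht]
            rw [hval]
            rw [Finset.sum_eq_single t₀
              (fun b _ hb => by rw [hbbι b, if_neg hb, mul_zero])
              (fun h' => absurd (Finset.mem_univ _) h')]
            rw [hbbι t₀]
            simp [mul_comm]
          · -- non-injective case
            obtain ⟨a, b, hab, hne⟩ := Function.not_injective_iff.mp hι
            set τ := Equiv.swap a b with hτ
            have hfix : ι ∘ ⇑τ⁻¹ = ι := by
              funext j
              simp only [hτ, Equiv.swap_inv, Function.comp_apply, Equiv.swap_apply_def]
              split_ifs <;> simp_all
            have hstar := star ι τ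
            rw [hfix] at hstar
            have hcτ : c τ = -1 := by
              simp [hc, hτ, Equiv.Perm.sign_swap hne]
            have h4 : (2 : k) * coeff (D p n r ι) F = 0 := by
              rw [two_mul]
              nth_rewrite 1 [← hstar]
              rw [hcτ]
              ring
            have hx : coeff (D p n r ι) F = 0 := (mul_eq_zero.mp h4).resolve_left h2ne
            have hz : ∀ (t : T) (σ : Equiv.Perm (Fin r)),
                ¬(D p n r (emb t ∘ ⇑σ) = D p n r ι) := by
              intro t σ hh
              apply hι
              rw [← hDeq.mp hh]
              exact (hemb_mono t).injective.comp σ.injective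
            rw [hx]
            symm
            refine Finset.sum_eq_zero fun t _ => ?_
            have hz0 : coeff (D p n r ι) (bb t) = 0 := by
              rw [hcoeff_b]
              exact Finset.sum_eq_zero fun σ _ => by rw [if_neg (hz t σ), mul_zero]
            rw [hz0, mul_zero]
        · push_neg at hd
          rw [hFsupp _ hd]
          have : ∀ t : T, coeff d (bb t) = 0 := by
            intro t
            rw [hcoeff_b]
            refine Finset.sum_eq_zero fun σ _ => ?_
            rw [if_neg (hd _), mul_zero]
          symm
          exact Finset.sum_eq_zero fun t _ => by rw [this t, mul_zero]
      rw [key]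
      exact Submodule.sum_mem _ fun t _ =>
        Submodule.smul_mem _ _ (Submodule.subset_span ⟨t, rfl⟩)
    · rw [Submodule.span_le]
      rintro x ⟨t, rfl⟩
      exact ⟨hbV t, hK_mem.mpr (hbK t)⟩
  rw [hWspan, finrank_span_eq_card hli]
  have hcard : Fintype.card T = Fintype.card {t : Finset (Fin n) // t.card = r} :=
    Fintype.card_congr (Equiv.refl _)
  rw [hcard, Fintype.card_finset_len, Fintype.card_fin]
end

section
/- Let R be a commutative ring, M and N R-modules, and m = m' + m'' with m', m'' ≥ 0. If Λ^{m'+1} M = 0 and Λ^{m''+1} N = 0, then the canonical map gives an isomorphism Λ^{m'} M ⊗_R Λ^{m''} N ≅ Λ^m (M ⊕ N). -/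
open TensorProduct ExteriorAlgebra
open scoped DirectSum

namespace Stmt11Aux

set_option maxHeartbeats 800000
set_option synthInstance.maxHeartbeats 80000

variable (R M N : Type*) [CommRing R] [AddCommGroup M] [Module R M]
    [AddCommGroup N] [Module R N]

noncomputable abbrev GT := GradedTensorProduct R (fun i : ℕ => ⋀[R]^i M) (fun i : ℕ => ⋀[R]^i N)

lemma gt_zero_tmul (b : ExteriorAlgebra R N) :
    ((0 : ExteriorAlgebra R M) ᵍ⊗ₜ[R] b : GT R M N) = 0 := by
  rw [GradedTensorProduct.tmul, TensorProduct.zero_tmul, map_zero]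

lemma gt_tmul_zero (a : ExteriorAlgebra R M) :
    (a ᵍ⊗ₜ[R] (0 : ExteriorAlgebra R N) : GT R M N) = 0 := by
  rw [GradedTensorProduct.tmul, TensorProduct.tmul_zero, map_zero]

noncomputable def Phi : ExteriorAlgebra R (M × N) →ₐ[R] GT R M N :=
  ExteriorAlgebra.lift R ⟨
    (GradedTensorProduct.includeLeft _ _).toLinearMap ∘ₗ ExteriorAlgebra.ι R ∘ₗ LinearMap.fst R M N
      + (GradedTensorProduct.includeRight _ _).toLinearMap ∘ₗ ExteriorAlgebra.ι R
          ∘ₗ LinearMap.snd R M N,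
    fun v => by
      have hx : ι R v.1 ∈ (fun i : ℕ => ⋀[R]^i M) 1 := by
        simpa [pow_one] using LinearMap.mem_range_self _ v.1
      have hy : ι R v.2 ∈ (fun i : ℕ => ⋀[R]^i N) 1 := by
        simpa [pow_one] using LinearMap.mem_range_self _ v.2
      set a : (fun i : ℕ => ⋀[R]^i M) 1 := ⟨ι R v.1, hx⟩ with ha
      set b : (fun i : ℕ => ⋀[R]^i N) 1 := ⟨ι R v.2, hy⟩ with hb
      simp only [LinearMap.add_apply, LinearMap.coe_comp, Function.comp_apply,
        AlgHom.toLinearMap_apply, GradedTensorProduct.includeLeft_apply,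
        GradedTensorProduct.includeRight_apply, LinearMap.fst_apply, LinearMap.snd_apply]
      rw [add_mul, mul_add, mul_add]
      have e1 : ((ι R v.1 ᵍ⊗ₜ[R] (1:ExteriorAlgebra R N)) *
          (ι R v.1 ᵍ⊗ₜ[R] (1:ExteriorAlgebra R N)) : GT R M N) = 0 := by
        have := GradedTensorProduct.tmul_one_mul_coe_tmul (fun i : ℕ => ⋀[R]^i M)
          (fun i : ℕ => ⋀[R]^i N) (ι R v.1) a (1 : ExteriorAlgebra R N)
        simp only [ha, hb, Submodule.coe_mk] at this
        rw [this, ι_sq_zero, gt_zero_tmul]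
      have e2 : ((ι R v.1 ᵍ⊗ₜ[R] (1:ExteriorAlgebra R N)) *
          ((1:ExteriorAlgebra R M) ᵍ⊗ₜ[R] ι R v.2) : GT R M N) = ι R v.1 ᵍ⊗ₜ[R] ι R v.2 :=
        GradedTensorProduct.tmul_one_mul_one_tmul _ _ _ _
      have e3 : (((1:ExteriorAlgebra R M) ᵍ⊗ₜ[R] ι R v.2) *
          (ι R v.1 ᵍ⊗ₜ[R] (1:ExteriorAlgebra R N)) : GT R M N) = -(ι R v.1 ᵍ⊗ₜ[R] ι R v.2) := by
        have := GradedTensorProduct.tmul_coe_mul_coe_tmul (fun i : ℕ => ⋀[R]^i M)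
          (fun i : ℕ => ⋀[R]^i N) (1 : ExteriorAlgebra R M) b a (1 : ExteriorAlgebra R N)
        simp only [ha, hb, Submodule.coe_mk] at this
        rw [this]
        norm_num
      have e4 : (((1:ExteriorAlgebra R M) ᵍ⊗ₜ[R] ι R v.2) *
          ((1:ExteriorAlgebra R M) ᵍ⊗ₜ[R] ι R v.2) : GT R M N) = 0 := by
        have := GradedTensorProduct.tmul_coe_mul_one_tmul (fun i : ℕ => ⋀[R]^i M)
          (fun i : ℕ => ⋀[R]^i N) (1 : ExteriorAlgebra R M) b (ι R v.2)
        simp only [ha, hb, Submodule.coe_mk] at this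
        rw [this, ι_sq_zero, gt_tmul_zero]
      rw [e1, e2, e3, e4]
      abel⟩

lemma Phi_ι (v : M × N) : Phi R M N (ι R v) =
    ι R v.1 ᵍ⊗ₜ[R] (1:ExteriorAlgebra R N) + (1:ExteriorAlgebra R M) ᵍ⊗ₜ[R] ι R v.2 := by
  rw [Phi, ExteriorAlgebra.lift_ι_apply]
  rfl

lemma Phi_map_inl (x : ExteriorAlgebra R M) :
    Phi R M N (ExteriorAlgebra.map (LinearMap.inl R M N) x) = x ᵍ⊗ₜ[R] (1:ExteriorAlgebra R N) := by
  have : (Phi R M N).comp (ExteriorAlgebra.map (LinearMap.inl R M N))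
      = GradedTensorProduct.includeLeft _ _ := by
    ext w
    simp only [AlgHom.comp_toLinearMap, LinearMap.coe_comp, Function.comp_apply,
      AlgHom.toLinearMap_apply, ExteriorAlgebra.map_apply_ι, Phi_ι,
      GradedTensorProduct.includeLeft_apply, LinearMap.inl_apply]
    rw [map_zero, gt_tmul_zero, add_zero]
  simpa using congrArg (fun f => f x) (congrArg AlgHom.toLinearMap this)

lemma Phi_map_inr (y : ExteriorAlgebra R N) :
    Phi R M N (ExteriorAlgebra.map (LinearMap.inr R M N) y) = (1:ExteriorAlgebra R M) ᵍ⊗ₜ[R] y := by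
  have : (Phi R M N).comp (ExteriorAlgebra.map (LinearMap.inr R M N))
      = GradedTensorProduct.includeRight _ _ := by
    ext w
    simp only [AlgHom.comp_toLinearMap, LinearMap.coe_comp, Function.comp_apply,
      AlgHom.toLinearMap_apply, ExteriorAlgebra.map_apply_ι, Phi_ι,
      GradedTensorProduct.includeRight_apply, LinearMap.inr_apply]
    rw [map_zero, gt_zero_tmul, zero_add]
  simpa using congrArg (fun f => f y) (congrArg AlgHom.toLinearMap this)

lemma emap_pow_le {M' : Type*} [AddCommGroup M'] [Module R M'] (f : M →ₗ[R] M') (n : ℕ) :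
    Submodule.map (ExteriorAlgebra.map f).toLinearMap (⋀[R]^n M) ≤ ⋀[R]^n M' := by
  rw [exteriorPower, exteriorPower, Submodule.map_pow]
  have h1 : Submodule.map (ExteriorAlgebra.map f).toLinearMap
      (LinearMap.range (ι R (M := M))) ≤ LinearMap.range (ι R (M := M')) := by
    rw [← LinearMap.range_comp, ExteriorAlgebra.map_comp_ι, LinearMap.range_comp]
    exact LinearMap.map_le_range
  induction n with
  | zero => simp
  | succ n ih =>
    rw [pow_succ, pow_succ]
    exact mul_le_mul' ih h1

lemma subsingleton_eq_bot {A : Type*} [Ring A] [Algebra R A] (p : Submodule R A)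
    (h : Subsingleton p) : p = ⊥ := by
  rw [eq_bot_iff]
  intro x hx
  have : (⟨x, hx⟩ : p) = ⟨0, p.zero_mem⟩ := Subsingleton.elim _ _
  simpa using congrArg Subtype.val this

lemma pow_eq_bot_of_le {A : Type*} [Ring A] [Algebra R A] (p : Submodule R A)
    {n k : ℕ} (h : p ^ n = ⊥) (hnk : n ≤ k) : p ^ k = ⊥ := by
  obtain ⟨l, rfl⟩ := Nat.exists_eq_add_of_le hnk
  rw [pow_add, h, Submodule.bot_mul]

lemma pow_le_pow_of_le' {A : Type*} [Ring A] [Algebra R A] {p q : Submodule R A}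
    (h : p ≤ q) (n : ℕ) : p ^ n ≤ q ^ n := by
  induction n with
  | zero => simp
  | succ n ih => rw [pow_succ, pow_succ]; exact mul_le_mul' ih h

lemma natCast_le_one {A : Type*} [Ring A] [Algebra R A] (c : ℕ) :
    (c : Submodule R A) ≤ 1 := by
  induction c with
  | zero => simp
  | succ c ih => rw [Nat.cast_succ, Submodule.add_eq_sup]; exact sup_le ih le_rfl

section Decomp

variable (m' m'' : ℕ)

noncomputable abbrev P1 : Submodule R (ExteriorAlgebra R (M × N)) :=
  Submodule.map (ExteriorAlgebra.map (LinearMap.inl R M N)).toLinearMap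
    (LinearMap.range (ι R (M := M)))

noncomputable abbrev P2 : Submodule R (ExteriorAlgebra R (M × N)) :=
  Submodule.map (ExteriorAlgebra.map (LinearMap.inr R M N)).toLinearMap
    (LinearMap.range (ι R (M := N)))

lemma P1_pow (k : ℕ) : P1 R M N ^ k
    = Submodule.map (ExteriorAlgebra.map (LinearMap.inl R M N)).toLinearMap (⋀[R]^k M) := by
  rw [exteriorPower, Submodule.map_pow]

lemma P2_pow (k : ℕ) : P2 R M N ^ k
    = Submodule.map (ExteriorAlgebra.map (LinearMap.inr R M N)).toLinearMap (⋀[R]^k N) := by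
  rw [exteriorPower, Submodule.map_pow]

lemma range_eq_sup : LinearMap.range (ι R (M := M × N)) = P1 R M N ⊔ P2 R M N := by
  apply le_antisymm
  · rintro _ ⟨v, rfl⟩
    have : ι R v = ι R ((v.1, 0) : M × N) + ι R ((0, v.2) : M × N) := by
      rw [← map_add]; congr 1; ext <;> simp
    rw [this]
    refine Submodule.add_mem _ (Submodule.mem_sup_left ?_) (Submodule.mem_sup_right ?_)
    · exact ⟨ι R v.1, ⟨v.1, rfl⟩, (ExteriorAlgebra.map_apply_ι _ _)⟩
    · exact ⟨ι R v.2, ⟨v.2, rfl⟩, (ExteriorAlgebra.map_apply_ι _ _)⟩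
  · refine sup_le ?_ ?_ <;> rintro _ ⟨_, ⟨w, rfl⟩, rfl⟩ <;>
      rw [AlgHom.toLinearMap_apply, ExteriorAlgebra.map_apply_ι] <;> exact ⟨_, rfl⟩

lemma commute_P1_P2 : Commute (P1 R M N) (P2 R M N) := by
  have key : ∀ (p q : Submodule R (ExteriorAlgebra R (M × N))),
      (∀ x ∈ p, ∃ v : M × N, ι R v = x) → (∀ y ∈ q, ∃ w : M × N, ι R w = y) →
      p * q ≤ q * p := by
    intro p q hp hq
    refine Submodule.mul_le.2 fun a ha b hb => ?_
    obtain ⟨v, rfl⟩ := hp a ha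
    obtain ⟨w, rfl⟩ := hq b hb
    have : ι R v * ι R w = -(ι R w * ι R v) :=
      eq_neg_of_add_eq_zero_left (ExteriorAlgebra.ι_add_mul_swap v w)
    rw [this]
    exact Submodule.neg_mem _ (Submodule.mul_mem_mul hb ha)
  have h1 : ∀ x ∈ P1 R M N, ∃ v : M × N, ι R v = x := by
    rintro _ ⟨_, ⟨w, rfl⟩, rfl⟩
    exact ⟨(w, 0), by simp⟩
  have h2 : ∀ y ∈ P2 R M N, ∃ w : M × N, ι R w = y := by
    rintro _ ⟨_, ⟨w, rfl⟩, rfl⟩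
    exact ⟨(0, w), by simp⟩
  exact le_antisymm (key _ _ h1 h2) (key _ _ h2 h1)

end Decomp

lemma decomp (m' m'' : ℕ) (h1 : (⋀[R]^(m'+1) M : Submodule R _) = ⊥)
    (h2 : (⋀[R]^(m''+1) N : Submodule R _) = ⊥) :
    (⋀[R]^(m'+m'') (M × N) : Submodule R (ExteriorAlgebra R (M × N)))
      = P1 R M N ^ m' * P2 R M N ^ m'' := by
  have hP1 : ∀ k, m' + 1 ≤ k → P1 R M N ^ k = ⊥ := fun k hk => by
    rw [P1_pow]
    have hb : (⋀[R]^k M : Submodule R _) = ⊥ := pow_eq_bot_of_le R _ h1 hk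
    rw [hb, Submodule.map_bot]
  have hP2 : ∀ k, m'' + 1 ≤ k → P2 R M N ^ k = ⊥ := fun k hk => by
    rw [P2_pow]
    have hb : (⋀[R]^k N : Submodule R _) = ⊥ := pow_eq_bot_of_le R _ h2 hk
    rw [hb, Submodule.map_bot]
  have hc := commute_P1_P2 R M N
  rw [exteriorPower, range_eq_sup, ← Submodule.add_eq_sup]
  apply le_antisymm
  · rw [hc.add_pow]
    refine Finset.sum_induction _ (· ≤ P1 R M N ^ m' * P2 R M N ^ m'')
      (fun a b ha hb => by rw [Submodule.add_eq_sup]; exact sup_le ha hb) bot_le ?_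
    intro k hk
    rw [Finset.mem_range] at hk
    rcases lt_trichotomy k m' with h | heq | h
    · have : m'' + 1 ≤ m' + m'' - k := by omega
      rw [hP2 _ this, Submodule.mul_bot, Submodule.bot_mul]
      exact bot_le
    · rw [heq]
      have : m' + m'' - m' = m'' := by omega
      rw [this]
      calc P1 R M N ^ m' * P2 R M N ^ m'' * ((m' + m'').choose m' : Submodule R _)
          ≤ P1 R M N ^ m' * P2 R M N ^ m'' * 1 :=
            mul_le_mul' le_rfl (natCast_le_one R _)
        _ = P1 R M N ^ m' * P2 R M N ^ m'' := mul_one _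
    · rw [hP1 _ h, Submodule.bot_mul, Submodule.bot_mul]
      exact bot_le
  · rw [pow_add]
    exact mul_le_mul'
      (pow_le_pow_of_le' R (by rw [Submodule.add_eq_sup]; exact le_sup_left) m')
      (pow_le_pow_of_le' R (by rw [Submodule.add_eq_sup]; exact le_sup_right) m'')

lemma mem_target (m' m'' : ℕ) (x : ⋀[R]^m' M) (y : ⋀[R]^m'' N) :
    ExteriorAlgebra.map (LinearMap.inl R M N) ↑x * ExteriorAlgebra.map (LinearMap.inr R M N) ↑y
      ∈ ⋀[R]^(m'+m'') (M × N) := by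
  rw [exteriorPower, pow_add]
  exact Submodule.mul_mem_mul
    (emap_pow_le R M (LinearMap.inl R M N) m' ⟨↑x, x.2, rfl⟩)
    (emap_pow_le R N (LinearMap.inr R M N) m'' ⟨↑y, y.2, rfl⟩)

noncomputable def mulMap (m' m'' : ℕ) :
    (⋀[R]^m' M ⊗[R] ⋀[R]^m'' N) →ₗ[R] ⋀[R]^(m'+m'') (M × N) :=
  TensorProduct.lift
    (LinearMap.mk₂ R (fun x y => ⟨_, mem_target R M N m' m'' x y⟩)
      (fun x₁ x₂ y => Subtype.ext <| by simp [add_mul])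
      (fun c x y => Subtype.ext <| by simp [smul_mul_assoc])
      (fun x y₁ y₂ => Subtype.ext <| by simp [mul_add])
      (fun c x y => Subtype.ext <| by simp [mul_smul_comm]))

lemma mulMap_tmul (m' m'' : ℕ) (x : ⋀[R]^m' M) (y : ⋀[R]^m'' N) :
    (mulMap R M N m' m'' (x ⊗ₜ y) : ExteriorAlgebra R (M × N)) =
      ExteriorAlgebra.map (LinearMap.inl R M N) ↑x
        * ExteriorAlgebra.map (LinearMap.inr R M N) ↑y := rfl

noncomputable def proj (m' : ℕ) : ExteriorAlgebra R M →ₗ[R] ⋀[R]^m' M :=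
  (DirectSum.component R ℕ (fun i => ⋀[R]^i M) m') ∘ₗ
    (DirectSum.decomposeLinearEquiv (fun i : ℕ => ⋀[R]^i M) : ExteriorAlgebra R M →ₗ[R] ⨁ i, ⋀[R]^i M)

lemma proj_coe (m' : ℕ) (x : ⋀[R]^m' M) : proj R M m' ↑x = x := by
  rw [proj]
  simp only [LinearMap.coe_comp, Function.comp_apply, LinearEquiv.coe_coe,
    DirectSum.decomposeLinearEquiv_apply, DirectSum.decompose_coe]
  rw [← DirectSum.lof_eq_of R ℕ (fun i => ↥(⋀[R]^i M)) m' x]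
  exact DirectSum.component.lof_self (M := fun i => ↥(⋀[R]^i M)) R m' x

noncomputable def psi (m' m'' : ℕ) :
    ⋀[R]^(m'+m'') (M × N) →ₗ[R] (⋀[R]^m' M ⊗[R] ⋀[R]^m'' N) :=
  (TensorProduct.map (proj R M m') (proj R N m'')) ∘ₗ
    ((GradedTensorProduct.of R (fun i : ℕ => ⋀[R]^i M) (fun i : ℕ => ⋀[R]^i N)).symm :
        GT R M N →ₗ[R] ExteriorAlgebra R M ⊗[R] ExteriorAlgebra R N) ∘ₗ
    (Phi R M N).toLinearMap ∘ₗ (⋀[R]^(m'+m'') (M × N)).subtype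

lemma psi_mulMap (m' m'' : ℕ) (t : ⋀[R]^m' M ⊗[R] ⋀[R]^m'' N) :
    psi R M N m' m'' (mulMap R M N m' m'' t) = t := by
  induction t with
  | zero => simp
  | add a b ha hb => simp [map_add, ha, hb]
  | tmul x y =>
    simp only [psi, LinearMap.coe_comp, Function.comp_apply, Submodule.coe_subtype,
      AlgHom.toLinearMap_apply, mulMap_tmul]
    rw [map_mul, Phi_map_inl, Phi_map_inr, GradedTensorProduct.tmul_one_mul_one_tmul]
    rw [GradedTensorProduct.tmul]
    erw [GradedTensorProduct.of_symm_of]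
    simp [proj_coe]

lemma mulMap_surjective (m' m'' : ℕ)
    (h1 : Subsingleton (⋀[R]^(m' + 1) M)) (h2 : Subsingleton (⋀[R]^(m'' + 1) N)) :
    Function.Surjective (mulMap R M N m' m'') := by
  have hd := decomp R M N m' m'' (subsingleton_eq_bot R _ h1) (subsingleton_eq_bot R _ h2)
  intro z
  have hz : (z : ExteriorAlgebra R (M × N)) ∈ P1 R M N ^ m' * P2 R M N ^ m'' := by
    rw [← hd]; exact z.2
  have hT : P1 R M N ^ m' * P2 R M N ^ m''
      ≤ Submodule.map (⋀[R]^(m'+m'') (M × N)).subtype (LinearMap.range (mulMap R M N m' m'')) := by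
    refine Submodule.mul_le.2 fun a ha b hb => ?_
    rw [P1_pow] at ha
    rw [P2_pow] at hb
    obtain ⟨x, hx, rfl⟩ := ha
    obtain ⟨y, hy, rfl⟩ := hb
    exact ⟨mulMap R M N m' m'' ((⟨x, hx⟩ : ⋀[R]^m' M) ⊗ₜ (⟨y, hy⟩ : ⋀[R]^m'' N)),
      LinearMap.mem_range_self _ _, rfl⟩
  obtain ⟨w, hw, hwz⟩ := hT hz
  obtain ⟨t, rfl⟩ := hw
  exact ⟨t, Subtype.coe_injective hwz⟩

end Stmt11Aux

/-- If `Λ^{m'+1} M = 0` and `Λ^{m''+1} N = 0` then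
`Λ^{m'} M ⊗ Λ^{m''} N ≅ Λ^{m'+m''}(M ⊕ N)`. -/
theorem stmt11 (R M N : Type*) [CommRing R] [AddCommGroup M] [Module R M]
    [AddCommGroup N] [Module R N] (m' m'' : ℕ)
    (h1 : Subsingleton (⋀[R]^(m' + 1) M)) (h2 : Subsingleton (⋀[R]^(m'' + 1) N)) :
    Nonempty ((⋀[R]^m' M ⊗[R] ⋀[R]^m'' N) ≃ₗ[R] ⋀[R]^(m' + m'') (M × N)) := by
  refine ⟨LinearEquiv.ofBijective (Stmt11Aux.mulMap R M N m' m'')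
    ⟨?_, Stmt11Aux.mulMap_surjective R M N m' m'' h1 h2⟩⟩
  have : Function.LeftInverse (Stmt11Aux.psi R M N m' m'') (Stmt11Aux.mulMap R M N m' m'') :=
    fun t => Stmt11Aux.psi_mulMap R M N m' m'' t
  exact this.injective
end

section
/- Let R be a commutative local ring and M an R-module of finite length n. Then Λ^m M = 0 for all m > n. -/
open ExteriorAlgebra in
lemma alt_map_eq_zero_of_span
    {R M N : Type*} [CommRing R] [AddCommGroup M] [Module R M]
    [AddCommGroup N] [Module R N] {k m : ℕ} (h : k < m)
    (f : M [⋀^Fin m]→ₗ[R] N) (g : Fin k → M) (v : Fin m → M)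
    (hv : ∀ i, v i ∈ Submodule.span R (Set.range g)) : f v = 0 := by
  choose c hc using fun i => (Submodule.mem_span_range_iff_exists_fun R).mp (hv i)
  have hv' : v = fun i => ∑ j : Fin k, c i j • g j := by
    funext i; exact (hc i).symm
  rw [hv']
  rw [show (f fun i => ∑ j : Fin k, c i j • g j)
      = f.toMultilinearMap (fun i => ∑ j : Fin k, c i j • g j) from rfl,
    MultilinearMap.map_sum]
  apply Finset.sum_eq_zero
  intro r _
  have hr : ¬ Function.Injective r := by
    intro hinj
    have := Fintype.card_le_of_injective r hinj
    simp at this; omega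
  rw [Function.not_injective_iff] at hr
  obtain ⟨i, j, hij, hne⟩ := hr
  rw [f.toMultilinearMap.map_smul_univ]
  have : f (fun i => g (r i)) = 0 :=
    f.map_eq_zero_of_eq _ (by rw [hij]) hne
  rw [show f.toMultilinearMap (fun i => g (r i)) = f (fun i => g (r i)) from rfl, this,
    smul_zero]

lemma span_of_composition_series
    {R M : Type*} [CommRing R] [AddCommGroup M] [Module R M]
    (s : CompositionSeries (Submodule R M)) (hhead : s.head = ⊥)
    (k : ℕ) (hk : k ≤ s.length) :
    ∃ g : Fin k → M, Submodule.span R (Set.range g) = s ⟨k, by omega⟩ := by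
  induction k with
  | zero =>
    refine ⟨Fin.elim0, ?_⟩
    rw [Set.range_eq_empty, Submodule.span_empty]
    exact hhead.symm
  | succ k ih =>
    obtain ⟨g, hg⟩ := ih (by omega)
    have hstep : s ⟨k, by omega⟩ ⋖ s ⟨k + 1, by omega⟩ := by
      have := s.step ⟨k, by omega⟩
      exact this
    obtain ⟨x, hx2, hx1⟩ := SetLike.exists_of_lt hstep.lt
    refine ⟨Fin.snoc g x, ?_⟩
    have hrange : Set.range (Fin.snoc g x : Fin (k + 1) → M)
        = Set.range g ∪ {x} := by
      ext y
      simp only [Set.mem_range, Set.mem_union, Set.mem_singleton_iff]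
      constructor
      · rintro ⟨i, rfl⟩
        refine Fin.lastCases ?_ ?_ i
        · right; simp
        · intro j; left; exact ⟨j, by simp⟩
      · rintro (⟨j, rfl⟩ | rfl)
        · exact ⟨j.castSucc, by simp⟩
        · exact ⟨Fin.last k, by simp⟩
    rw [hrange, Submodule.span_union, hg]
    have hle : s ⟨k, by omega⟩ ⊔ Submodule.span R {x} ≤ s ⟨k + 1, by omega⟩ :=
      sup_le hstep.lt.le (by rwa [Submodule.span_singleton_le_iff_mem])
    have hlt : s ⟨k, by omega⟩ < s ⟨k, by omega⟩ ⊔ Submodule.span R {x} := by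
      refine lt_of_le_of_ne le_sup_left fun he => hx1 ?_
      rw [he]
      exact Submodule.mem_sup_right (Submodule.mem_span_singleton_self x)
    rcases hstep.wcovBy.eq_or_eq hlt.le hle with he | he
    · exact absurd he.symm hlt.ne
    · exact he

/-- Over a commutative local ring `R`, if `M` has finite length `n` (witnessed by a
composition series of length `n` from `⊥` to `⊤`), then `Λ^m M = 0` for all `m > n`. -/
theorem stmt12 (R M : Type*) [CommRing R] [IsLocalRing R] [AddCommGroup M] [Module R M]
    (n : ℕ) (s : CompositionSeries (Submodule R M))
    (hhead : s.head = ⊥) (hlast : s.last = ⊤) (hlen : s.length = n) :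
    ∀ m : ℕ, n < m → Subsingleton (⋀[R]^m M) := by
  intro m hm
  obtain ⟨g, hg⟩ := span_of_composition_series s hhead s.length le_rfl
  have htop : Submodule.span R (Set.range g) = ⊤ := by
    rw [hg]; exact hlast
  have hzero : ∀ v : Fin m → M, ExteriorAlgebra.ιMulti R m v = 0 := by
    intro v
    exact alt_map_eq_zero_of_span (by omega) (ExteriorAlgebra.ιMulti R m) g v
      (fun i => htop ▸ Submodule.mem_top)
  have hbot : (⋀[R]^m M) = ⊥ := by
    rw [← ExteriorAlgebra.ιMulti_span_fixedDegree]
    rw [Submodule.span_eq_bot]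
    rintro x ⟨v, rfl⟩
    exact hzero v
  rw [hbot]
  infer_instance
end

section
/- Let R be a commutative local ring, and M, N R-modules of finite lengths n and m respectively. Then Λ^{n+m}(M ⊕ N) ≅ Λ^n M ⊗_R Λ^m N. -/
set_option synthInstance.maxHeartbeats 800000
set_option maxHeartbeats 1600000

open TensorProduct ExteriorAlgebra

section Gen
variable {R M : Type*} [CommRing R] [AddCommGroup M] [Module R M]

lemma gen_of_compositionSeries (s : CompositionSeries (Submodule R M))
    (hshead : s.head = ⊥) (hslast : s.last = ⊤) :
    ∃ x : Fin s.length → M, Submodule.span R (Set.range x) = ⊤ := by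
  have hstep : ∀ i : Fin s.length, s i.castSucc ⋖ s i.succ := s.step
  have hex : ∀ i : Fin s.length, ∃ x : M, x ∈ s i.succ ∧ x ∉ s i.castSucc := by
    intro i
    obtain ⟨x, hx⟩ := SetLike.exists_of_lt (hstep i).lt
    exact ⟨x, hx.1, hx.2⟩
  choose x hx1 hx2 using hex
  refine ⟨x, top_le_iff.mp ?_⟩
  rw [← hslast]
  have key : ∀ i : Fin (s.length + 1), s i ≤ Submodule.span R (Set.range x) := by
    intro i
    induction i using Fin.induction with
    | zero => rw [show s 0 = s.head from rfl, hshead]; exact bot_le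
    | succ j ih =>
      -- s j.succ = s j.castSucc ⊔ span {x j}
      have hsup : s j.castSucc ⊔ Submodule.span R {x j} = s j.succ := by
        have hle : s j.castSucc ⊔ Submodule.span R {x j} ≤ s j.succ := by
          refine sup_le ((hstep j).lt.le) ?_
          rw [Submodule.span_le, Set.singleton_subset_iff]
          exact hx1 j
        have hlt : s j.castSucc < s j.castSucc ⊔ Submodule.span R {x j} := by
          refine lt_of_le_of_ne le_sup_left ?_
          intro h
          apply hx2 j
          have : x j ∈ s j.castSucc ⊔ Submodule.span R {x j} :=
            Submodule.mem_sup_right (Submodule.mem_span_singleton_self (x j))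
          rwa [h]
        rcases eq_or_lt_of_le hle with h | h
        · exact h
        · exact absurd h ((hstep j).2 hlt)
      rw [← hsup]
      refine sup_le ih ?_
      rw [Submodule.span_le, Set.singleton_subset_iff]
      exact Submodule.subset_span ⟨j, rfl⟩
  exact key (Fin.last s.length)

end Gen

section Van
variable {R M : Type*} [CommRing R] [AddCommGroup M] [Module R M]

lemma exteriorPower_eq_bot_of_gen {n : ℕ} (x : Fin n → M)
    (hx : Submodule.span R (Set.range x) = ⊤) {k : ℕ} (hk : n < k) :
    ⋀[R]^k M = ⊥ := by
  rw [← ιMulti_span_fixedDegree, Submodule.span_eq_bot]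
  rintro _ ⟨v, rfl⟩
  have hv : ∀ i : Fin k, ∃ c : Fin n → R, ∑ j, c j • x j = v i := fun i =>
    (Submodule.mem_span_range_iff_exists_fun R).mp (hx ▸ Submodule.mem_top)
  choose c hc using hv
  have hveq : v = fun i => ∑ j, c i j • x j := funext fun i => (hc i).symm
  rw [show ιMulti R k v = (ιMulti R k).toMultilinearMap v from rfl, hveq,
    MultilinearMap.map_sum]
  refine Finset.sum_eq_zero fun r _ => ?_
  rw [MultilinearMap.map_smul_univ]
  have hr : ¬ Function.Injective (x ∘ r) := by
    intro hinj
    have : Function.Injective r := fun a b hab => hinj (by simp [Function.comp, hab])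
    have := Fintype.card_le_of_injective r this
    simp at this; omega
  rw [show ((ιMulti R k).toMultilinearMap fun i => x (r i)) = ιMulti R k (x ∘ r) from rfl,
    (ιMulti R k).map_eq_zero_of_not_injective _ hr, smul_zero]

end Van

section Inv
variable {R M N : Type*} [CommRing R] [AddCommGroup M] [Module R M]
  [AddCommGroup N] [Module R N]

local notation "inv" => (CliffordAlgebra.involute (Q := (0 : QuadraticForm R M)))

lemma exterior_ι_mul_comm (m : M) (x : ExteriorAlgebra R M) :
    ι R m * x = CliffordAlgebra.involute x * ι R m := by
  induction x using ExteriorAlgebra.induction with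
  | algebraMap r => simp [Algebra.commutes]
  | ι a =>
    rw [CliffordAlgebra.involute_ι, neg_mul]
    have h := ExteriorAlgebra.ι_sq_zero (R := R) (m + a)
    rw [map_add, add_mul, mul_add, mul_add, ExteriorAlgebra.ι_sq_zero,
      ExteriorAlgebra.ι_sq_zero, zero_add, add_zero] at h
    linear_combination (norm := noncomm_ring) h
  | mul x y hx hy => rw [← mul_assoc, hx, mul_assoc, hy, map_mul, mul_assoc]
  | add x y hx hy => rw [mul_add, hx, hy, map_add, add_mul]

lemma involute_map_exteriorPower (i : ℕ) (a : ExteriorAlgebra R M) (ha : a ∈ ⋀[R]^i M) :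
    CliffordAlgebra.involute a ∈ ⋀[R]^i M := by
  have hmap : Submodule.map (CliffordAlgebra.involute (Q := (0 : QuadraticForm R M))).toLinearMap
      (LinearMap.range (ι R (M := M))) = LinearMap.range (ι R (M := M)) := by
    apply le_antisymm
    · rintro _ ⟨_, ⟨v, rfl⟩, rfl⟩
      exact ⟨-v, by simp⟩
    · rintro _ ⟨v, rfl⟩
      exact ⟨ι R (-v), ⟨-v, rfl⟩, by simp⟩
  have := Submodule.map_pow (R := R) (A := ExteriorAlgebra R M) (A' := ExteriorAlgebra R M)
    (M := LinearMap.range (ι R (M := M)))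
    (f := CliffordAlgebra.involute (Q := (0 : QuadraticForm R M))) i
  rw [hmap] at this
  rw [show (⋀[R]^i M) = LinearMap.range (ι R (M := M)) ^ i from rfl, ← this]
  exact ⟨a, ha, rfl⟩

lemma map_involute_comm (f : M →ₗ[R] N) (a : ExteriorAlgebra R M) :
    ExteriorAlgebra.map f (CliffordAlgebra.involute a)
      = CliffordAlgebra.involute (ExteriorAlgebra.map f a) := by
  induction a using ExteriorAlgebra.induction with
  | algebraMap r => simp
  | ι v => simp [CliffordAlgebra.involute_ι]
  | mul x y hx hy => simp only [map_mul, hx, hy]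
  | add x y hx hy => simp only [map_add, hx, hy]

end Inv

section Decomp
variable (R M N : Type*) [CommRing R] [AddCommGroup M] [Module R M]
  [AddCommGroup N] [Module R N]

noncomputable abbrev expIM : ExteriorAlgebra R M →ₐ[R] ExteriorAlgebra R (M × N) :=
  ExteriorAlgebra.map (LinearMap.inl R M N)

noncomputable abbrev expIN : ExteriorAlgebra R N →ₐ[R] ExteriorAlgebra R (M × N) :=
  ExteriorAlgebra.map (LinearMap.inr R M N)

noncomputable def expQQ (i j : ℕ) : Submodule R (ExteriorAlgebra R (M × N)) :=
  Submodule.map (expIM R M N).toLinearMap (⋀[R]^i M) *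
    Submodule.map (expIN R M N).toLinearMap (⋀[R]^j N)


lemma ι_prod_decomp (p : M × N) :
    ι R p = expIM R M N (ι R p.1) + expIN R M N (ι R p.2) := by
  rw [map_apply_ι, map_apply_ι, ← map_add]
  congr 1
  ext <;> simp

lemma exteriorPower_prod_le_sup (k : ℕ) :
    ⋀[R]^k (M × N) ≤ ⨆ i : Fin (k + 1), expQQ R M N i (k - i) := by
  induction k with
  | zero =>
    rw [show (⋀[R]^0 (M × N)) = (1 : Submodule R (ExteriorAlgebra R (M × N))) from pow_zero _]
    refine le_trans ?_ (le_iSup _ (0 : Fin 1))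
    rw [Submodule.one_le]
    have h1M : (1 : ExteriorAlgebra R M) ∈ ⋀[R]^0 M := by
      rw [show (⋀[R]^0 M) = (1 : Submodule R (ExteriorAlgebra R M)) from pow_zero _]
      exact Submodule.one_le.mp le_rfl
    have h1N : (1 : ExteriorAlgebra R N) ∈ ⋀[R]^0 N := by
      rw [show (⋀[R]^0 N) = (1 : Submodule R (ExteriorAlgebra R N)) from pow_zero _]
      exact Submodule.one_le.mp le_rfl
    have := Submodule.mul_mem_mul (M := Submodule.map (expIM R M N).toLinearMap (⋀[R]^0 M))
      (N := Submodule.map (expIN R M N).toLinearMap (⋀[R]^0 N))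
      ⟨1, h1M, map_one (expIM R M N)⟩ ⟨1, h1N, map_one (expIN R M N)⟩
    simpa [expQQ] using this
  | succ k ih =>
    rw [show (⋀[R]^(k+1) (M × N)) = LinearMap.range (ι R (M := M × N)) * ⋀[R]^k (M × N) from
      pow_succ' _ _]
    rw [Submodule.mul_le]
    rintro _ ⟨p, rfl⟩ z hz
    have hz' : z ∈ ⨆ i : Fin (k + 1), expQQ R M N i (k - i) := ih hz
    clear hz
    induction hz' using Submodule.iSup_induction' with
    | mem i x hx =>
      clear z
      induction hx using Submodule.mul_induction_on' with
      | add x hx y hy ihx ihy => rw [mul_add]; exact Submodule.add_mem _ ihx ihy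
      | mem_mul_mem a ha b hb =>
        obtain ⟨a', ha', rfl⟩ := ha
        obtain ⟨b', hb', rfl⟩ := hb
        simp only [AlgHom.toLinearMap_apply]
        rw [ι_prod_decomp, add_mul]
        apply Submodule.add_mem
        · -- term 1 : index i+1
          have : expIM R M N (ι R p.1) * (expIM R M N a' * expIN R M N b')
              = expIM R M N (ι R p.1 * a') * expIN R M N b' := by
            rw [map_mul, mul_assoc]
          rw [this]
          have hmem : ι R p.1 * a' ∈ ⋀[R]^(i + 1) M := by
            rw [show (⋀[R]^(i+1) M) = LinearMap.range (ι R (M := M)) * ⋀[R]^i M from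
              pow_succ' _ _]
            exact Submodule.mul_mem_mul ⟨p.1, rfl⟩ ha'
          have : (i : ℕ) + 1 ≤ k + 1 := Nat.succ_le_succ (Nat.lt_succ_iff.mp i.isLt)
          refine Submodule.mem_iSup_of_mem ⟨i + 1, Nat.lt_succ_of_le this⟩ ?_
          have hco : (k + 1) - ((i : ℕ) + 1) = k - i := by omega
          simp only [hco]
          exact Submodule.mul_mem_mul ⟨_, hmem, rfl⟩ ⟨_, hb', rfl⟩
        · -- term 2 : index i
          have hcomm : expIN R M N (ι R p.2) * expIM R M N a'
              = expIM R M N (CliffordAlgebra.involute a') * expIN R M N (ι R p.2) := by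
            rw [map_apply_ι]
            rw [exterior_ι_mul_comm (LinearMap.inr R M N p.2) (expIM R M N a')]
            rw [← map_involute_comm]
          have : expIN R M N (ι R p.2) * (expIM R M N a' * expIN R M N b')
              = expIM R M N (CliffordAlgebra.involute a') * expIN R M N (ι R p.2 * b') := by
            rw [← mul_assoc, hcomm, map_mul, mul_assoc]
          rw [this]
          have hmem : ι R p.2 * b' ∈ ⋀[R]^(k - i + 1) N := by
            rw [show (⋀[R]^(k-i+1) N) = LinearMap.range (ι R (M := N)) * ⋀[R]^(k-i) N from
              pow_succ' _ _]
            exact Submodule.mul_mem_mul ⟨p.2, rfl⟩ hb'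
          refine Submodule.mem_iSup_of_mem ⟨i, Nat.lt_succ_of_lt i.isLt⟩ ?_
          have hco : (k + 1) - (i : ℕ) = k - i + 1 := by
            have := Nat.lt_succ_iff.mp i.isLt; omega
          simp only [hco]
          exact Submodule.mul_mem_mul
            ⟨_, involute_map_exteriorPower i a' ha', rfl⟩ ⟨_, hmem, rfl⟩
    | zero => simp only [mul_zero]; exact Submodule.zero_mem _
    | add x y _ _ hx hy =>
      rw [mul_add]; exact Submodule.add_mem _ hx hy

end Decomp

section Fold
variable (R M N : Type*) [CommRing R] [AddCommGroup M] [Module R M]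
  [AddCommGroup N] [Module R N]

noncomputable def expLL :
    (M × N) →ₗ[R] (ExteriorAlgebra R M ⊗[R] ExteriorAlgebra R N) →ₗ[R]
      (ExteriorAlgebra R M ⊗[R] ExteriorAlgebra R N) where
  toFun p := LinearMap.rTensor _ (LinearMap.mulLeft R (ι R p.1)) +
    TensorProduct.map (CliffordAlgebra.involute (Q := (0 : QuadraticForm R M))).toLinearMap
      (LinearMap.mulLeft R (ι R p.2))
  map_add' p q := by
    ext a b
    simp [TensorProduct.add_tmul, TensorProduct.tmul_add, add_mul]
    abel
  map_smul' r p := by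
    ext a b
    simp [TensorProduct.smul_tmul, TensorProduct.tmul_smul, smul_mul_assoc]

lemma expLL_tmul (p : M × N) (a : ExteriorAlgebra R M) (b : ExteriorAlgebra R N) :
    expLL R M N p (a ⊗ₜ b) = (ι R p.1 * a) ⊗ₜ b
      + (CliffordAlgebra.involute a) ⊗ₜ (ι R p.2 * b) := by
  simp [expLL]

lemma expLL_sq (p : M × N) (x : ExteriorAlgebra R M ⊗[R] ExteriorAlgebra R N) :
    expLL R M N p (expLL R M N p x) = (0 : QuadraticForm R (M × N)) p • x := by
  rw [QuadraticMap.zero_apply, zero_smul]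
  induction x with
  | zero => simp
  | tmul a b =>
    rw [expLL_tmul, map_add, expLL_tmul, expLL_tmul]
    rw [← mul_assoc, ExteriorAlgebra.ι_sq_zero, zero_mul, TensorProduct.zero_tmul, zero_add,
      ← mul_assoc, ExteriorAlgebra.ι_sq_zero, zero_mul, TensorProduct.tmul_zero, add_zero,
      map_mul, CliffordAlgebra.involute_ι, neg_mul, TensorProduct.neg_tmul]
    abel
  | add x y hx hy => rw [map_add, map_add, hx, hy]; simp

noncomputable def expG : ExteriorAlgebra R (M × N) →ₗ[R]
    ExteriorAlgebra R M ⊗[R] ExteriorAlgebra R N :=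
  CliffordAlgebra.foldr 0 (expLL R M N) (expLL_sq R M N) (1 ⊗ₜ 1)

lemma expG_aux_N (b : ExteriorAlgebra R N) :
    ∀ y : ExteriorAlgebra R N,
      CliffordAlgebra.foldr 0 (expLL R M N) (expLL_sq R M N) ((1 : ExteriorAlgebra R M) ⊗ₜ y)
        (ExteriorAlgebra.map (LinearMap.inr R M N) b) = (1 : ExteriorAlgebra R M) ⊗ₜ (b * y) := by
  induction b using ExteriorAlgebra.induction with
  | algebraMap r =>
    intro y
    rw [AlgHom.commutes, CliffordAlgebra.foldr_algebraMap]
    rw [← TensorProduct.tmul_smul, ← Algebra.smul_def]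
  | ι v =>
    intro y
    rw [map_apply_ι, CliffordAlgebra.foldr_ι, expLL_tmul]
    simp
  | mul x y' hx hy' =>
    intro y
    rw [map_mul, CliffordAlgebra.foldr_mul, hy', hx, mul_assoc]
  | add x y' hx hy' =>
    intro y
    rw [map_add, map_add, hx, hy', ← TensorProduct.tmul_add, add_mul]

lemma expG_aux_M (a : ExteriorAlgebra R M) :
    ∀ (a' : ExteriorAlgebra R M) (y : ExteriorAlgebra R N),
      CliffordAlgebra.foldr 0 (expLL R M N) (expLL_sq R M N) (a' ⊗ₜ y)
        (ExteriorAlgebra.map (LinearMap.inl R M N) a) = (a * a') ⊗ₜ y := by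
  induction a using ExteriorAlgebra.induction with
  | algebraMap r =>
    intro a' y
    rw [AlgHom.commutes, CliffordAlgebra.foldr_algebraMap]
    rw [← Algebra.smul_def, TensorProduct.smul_tmul']
  | ι v =>
    intro a' y
    rw [map_apply_ι, CliffordAlgebra.foldr_ι, expLL_tmul]
    simp
  | mul x y' hx hy' =>
    intro a' y
    rw [map_mul, CliffordAlgebra.foldr_mul, hy', hx, mul_assoc]
  | add x y' hx hy' =>
    intro a' y
    rw [map_add, map_add, hx, hy', ← TensorProduct.add_tmul, add_mul]

lemma expG_key (a : ExteriorAlgebra R M) (b : ExteriorAlgebra R N) :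
    expG R M N (ExteriorAlgebra.map (LinearMap.inl R M N) a *
      ExteriorAlgebra.map (LinearMap.inr R M N) b) = a ⊗ₜ b := by
  rw [expG, CliffordAlgebra.foldr_mul, expG_aux_N, expG_aux_M, mul_one, mul_one]

end Fold

section Proj
variable (R M : Type*) [CommRing R] [AddCommGroup M] [Module R M]

noncomputable def expProj (i : ℕ) : ExteriorAlgebra R M →ₗ[R] ⋀[R]^i M :=
  (DirectSum.component R ℕ (fun j => (⋀[R]^j M : Submodule R (ExteriorAlgebra R M))) i) ∘ₗ
    (DirectSum.decomposeLinearEquiv (fun j : ℕ => (⋀[R]^j M : Submodule R (ExteriorAlgebra R M)))).toLinearMap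

lemma expProj_of_mem {i : ℕ} {a : ExteriorAlgebra R M} (h : a ∈ ⋀[R]^i M) :
    expProj R M i a = ⟨a, h⟩ := by
  apply Subtype.ext
  have := DirectSum.decompose_of_mem_same (fun j : ℕ => (⋀[R]^j M : Submodule R (ExteriorAlgebra R M))) h
  exact this

lemma map_exteriorPower_le {R M N : Type*} [CommRing R] [AddCommGroup M] [Module R M]
    [AddCommGroup N] [Module R N] (f : M →ₗ[R] N) (i : ℕ) :
    Submodule.map (ExteriorAlgebra.map f).toLinearMap (⋀[R]^i M) ≤ ⋀[R]^i N := by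
  have h1 : Submodule.map (ExteriorAlgebra.map f).toLinearMap (LinearMap.range (ι R (M := M)))
      ≤ LinearMap.range (ι R (M := N)) := by
    rintro _ ⟨_, ⟨v, rfl⟩, rfl⟩
    exact ⟨f v, (map_apply_ι f v).symm⟩
  have h2 := Submodule.map_pow (R := R) (A := ExteriorAlgebra R M) (A' := ExteriorAlgebra R N)
    (M := LinearMap.range (ι R (M := M))) (f := ExteriorAlgebra.map f) i
  rw [show (⋀[R]^i M) = LinearMap.range (ι R (M := M)) ^ i from rfl, h2]
  clear h2
  induction i with
  | zero => simp
  | succ i ih =>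
    rw [pow_succ, show (⋀[R]^(i+1) N) = LinearMap.range (ι R (M := N)) ^ (i+1) from rfl, pow_succ]
    exact mul_le_mul' ih h1

end Proj

section Main
variable (R M N : Type*) [CommRing R] [AddCommGroup M] [Module R M]
  [AddCommGroup N] [Module R N]

noncomputable def expB0 (n m : ℕ) :
    (⋀[R]^n M) ⊗[R] (⋀[R]^m N) →ₗ[R] ExteriorAlgebra R (M × N) :=
  TensorProduct.lift ((LinearMap.mul R (ExteriorAlgebra R (M × N))).compl₁₂
    ((expIM R M N).toLinearMap ∘ₗ (⋀[R]^n M).subtype)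
    ((expIN R M N).toLinearMap ∘ₗ (⋀[R]^m N).subtype))

lemma expB0_tmul (n m : ℕ) (x : ⋀[R]^n M) (y : ⋀[R]^m N) :
    expB0 R M N n m (x ⊗ₜ y) = expIM R M N (↑x) * expIN R M N (↑y) := by
  simp [expB0]

lemma expB0_mem (n m : ℕ) (z : (⋀[R]^n M) ⊗[R] (⋀[R]^m N)) :
    expB0 R M N n m z ∈ ⋀[R]^(n + m) (M × N) := by
  induction z with
  | zero => rw [map_zero]; exact Submodule.zero_mem _
  | tmul x y =>
    rw [expB0_tmul]
    have h1 : expIM R M N (↑x) ∈ ⋀[R]^n (M × N) :=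
      map_exteriorPower_le (LinearMap.inl R M N) n ⟨↑x, x.2, rfl⟩
    have h2 : expIN R M N (↑y) ∈ ⋀[R]^m (M × N) :=
      map_exteriorPower_le (LinearMap.inr R M N) m ⟨↑y, y.2, rfl⟩
    rw [show (⋀[R]^(n+m) (M × N))
      = LinearMap.range (ι R (M := M × N)) ^ (n + m) from rfl, pow_add]
    exact Submodule.mul_mem_mul h1 h2
  | add z w hz hw => rw [map_add]; exact Submodule.add_mem _ hz hw

noncomputable def expB (n m : ℕ) :
    (⋀[R]^n M) ⊗[R] (⋀[R]^m N) →ₗ[R] (⋀[R]^(n + m) (M × N)) :=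
  LinearMap.codRestrict _ (expB0 R M N n m) (expB0_mem R M N n m)

noncomputable def expGfull (n m : ℕ) :
    (⋀[R]^(n + m) (M × N)) →ₗ[R] (⋀[R]^n M) ⊗[R] (⋀[R]^m N) :=
  (TensorProduct.map (expProj R M n) (expProj R N m)) ∘ₗ expG R M N ∘ₗ
    (⋀[R]^(n + m) (M × N)).subtype

lemma expGfull_expB (n m : ℕ) (z : (⋀[R]^n M) ⊗[R] (⋀[R]^m N)) :
    expGfull R M N n m (expB R M N n m z) = z := by
  induction z with
  | zero => simp
  | tmul x y =>
    have hco : ((expB R M N n m (x ⊗ₜ y) : ⋀[R]^(n+m) (M × N)) : ExteriorAlgebra R (M × N))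
        = expIM R M N (↑x) * expIN R M N (↑y) := by
      rw [expB, LinearMap.codRestrict_apply, expB0_tmul]
    rw [expGfull, LinearMap.comp_apply, LinearMap.comp_apply, Submodule.subtype_apply, hco,
      expG_key, TensorProduct.map_tmul, expProj_of_mem R M x.2, expProj_of_mem R N y.2]
  | add z w hz hw => rw [map_add, map_add, hz, hw]

end Main

/-- Over a commutative local ring `R`, if `M` and `N` have finite lengths `n` and `m`,
then `Λ^{n+m}(M ⊕ N) ≅ Λ^n M ⊗ Λ^m N`. -/
theorem stmt13 (R M N : Type*) [CommRing R] [IsLocalRing R]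
    [AddCommGroup M] [Module R M] [AddCommGroup N] [Module R N] (n m : ℕ)
    (s : CompositionSeries (Submodule R M))
    (hshead : s.head = ⊥) (hslast : s.last = ⊤) (hslen : s.length = n)
    (t : CompositionSeries (Submodule R N))
    (hthead : t.head = ⊥) (htlast : t.last = ⊤) (htlen : t.length = m) :
    Nonempty ((⋀[R]^(n + m) (M × N)) ≃ₗ[R] (⋀[R]^n M ⊗[R] ⋀[R]^m N)) := by
  obtain ⟨x, hxspan⟩ := gen_of_compositionSeries s hshead hslast
  obtain ⟨y, hyspan⟩ := gen_of_compositionSeries t hthead htlast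
  have hMvan : ∀ k, n < k → ⋀[R]^k M = ⊥ := fun k hk =>
    exteriorPower_eq_bot_of_gen x hxspan (by omega)
  have hNvan : ∀ k, m < k → ⋀[R]^k N = ⊥ := fun k hk =>
    exteriorPower_eq_bot_of_gen y hyspan (by omega)
  -- surjectivity of expB
  have hsurj : Function.Surjective (expB R M N n m) := by
    rintro ⟨w, hw⟩
    have hle : (⨆ i : Fin (n + m + 1), expQQ R M N i (n + m - i)) ≤ expQQ R M N n m := by
      refine iSup_le fun i => ?_
      rcases lt_trichotomy (i : ℕ) n with hi | hi | hi
      · have : m < n + m - i := by omega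
        rw [expQQ, hNvan _ this, Submodule.map_bot, Submodule.mul_bot]
        exact bot_le
      · simp only [hi, show n + m - n = m from by omega]
        exact le_rfl
      · rw [expQQ, hMvan _ hi, Submodule.map_bot, Submodule.bot_mul]
        exact bot_le
    have hw' : w ∈ expQQ R M N n m := hle (exteriorPower_prod_le_sup R M N (n + m) hw)
    have hexz : ∃ z, expB0 R M N n m z = w := by
      clear hw
      induction hw' using Submodule.mul_induction_on' with
      | mem_mul_mem a ha b hb =>
        obtain ⟨a', ha', rfl⟩ := ha
        obtain ⟨b', hb', rfl⟩ := hb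
        exact ⟨(⟨a', ha'⟩ : ⋀[R]^n M) ⊗ₜ (⟨b', hb'⟩ : ⋀[R]^m N), by
          rw [expB0_tmul]; rfl⟩
      | add a ha b hb iha ihb =>
        obtain ⟨za, hza⟩ := iha
        obtain ⟨zb, hzb⟩ := ihb
        exact ⟨za + zb, by rw [map_add, hza, hzb]⟩
    obtain ⟨z, hz⟩ := hexz
    exact ⟨z, Subtype.ext (by rw [expB, LinearMap.codRestrict_apply, hz])⟩
  have hinj : Function.Injective (expB R M N n m) :=
    Function.LeftInverse.injective (g := expGfull R M N n m) (expGfull_expB R M N n m)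
  exact ⟨(LinearEquiv.ofBijective (expB R M N n m) ⟨hinj, hsurj⟩).symm⟩
end

section
/- Let p be a prime and R = F_p[x] the polynomial ring in one variable. The R-module A = R[y]/(x·y^p − x·y) is not flat over R; indeed the residue class of y^p − y is a nonzero element of A annihilated by x, so A has x-torsion. -/
set_option maxHeartbeats 1000000
set_option synthInstance.maxHeartbeats 400000


open Polynomial

/-- Over `R = F_p[x]`, the `R`-algebra `A = R[y]/(x·y^p − x·y)` is not flat; indeed the
class of `y^p − y` is a nonzero element of `A` annihilated by `x`. -/
theorem stmt16 (p : ℕ) (hp : p.Prime)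
    (I : Ideal (Polynomial (Polynomial (ZMod p))))
    (hI : I = Ideal.span
      {C (X : Polynomial (ZMod p)) * X ^ p - C (X : Polynomial (ZMod p)) * X}) :
    ¬ Module.Flat (Polynomial (ZMod p)) (Polynomial (Polynomial (ZMod p)) ⧸ I) ∧
    Ideal.Quotient.mk I (X ^ p - X) ≠ 0 ∧
    (algebraMap (Polynomial (ZMod p)) (Polynomial (Polynomial (ZMod p)) ⧸ I) :
      Polynomial (ZMod p) →+* Polynomial (Polynomial (ZMod p)) ⧸ I) X *
        Ideal.Quotient.mk I (X ^ p - X) = 0 := by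
  haveI := Fact.mk hp
  set R := Polynomial (ZMod p)
  set A := Polynomial (Polynomial (ZMod p)) ⧸ I
  have hg : (X : Polynomial R) ^ p - X ≠ 0 := by
    intro h
    have := congrArg (fun q => Polynomial.coeff q p) h
    simp only [coeff_sub, coeff_X_pow, if_pos rfl, coeff_zero] at this
    rw [Polynomial.coeff_X, if_neg hp.one_lt.ne] at this
    simp at this
  have hmem : C (X : R) * X ^ p - C (X : R) * X ∈ I := by
    rw [hI]; exact Ideal.subset_span rfl
  -- part 2
  have h2 : Ideal.Quotient.mk I ((X : Polynomial R) ^ p - X) ≠ 0 := by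
    rw [Ne, Ideal.Quotient.eq_zero_iff_mem, hI, Ideal.mem_span_singleton]
    rintro ⟨c, hc⟩
    have h1 : ((X : Polynomial R) ^ p - X) * (C X * c) = (X ^ p - X) * 1 := by
      conv_rhs => rw [mul_one, hc]
      ring
    have h1' := mul_left_cancel₀ hg h1
    have : IsUnit (C (X : R)) := IsUnit.of_mul_eq_one _ h1'
    rw [Polynomial.isUnit_C] at this
    exact Polynomial.not_isUnit_X this
  -- part 3
  have h3 : (algebraMap R A : R →+* A) X * Ideal.Quotient.mk I ((X : Polynomial R) ^ p - X) = 0 := by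
    have : (algebraMap R A : R →+* A) X = Ideal.Quotient.mk I (C X) := rfl
    rw [this, ← map_mul, Ideal.Quotient.eq_zero_iff_mem, mul_sub]
    exact hmem
  refine ⟨?_, h2, h3⟩
  intro hflat
  have hX : IsSMulRegular R (X : R) := fun a b h => by
    exact mul_left_cancel₀ Polynomial.X_ne_zero (by simpa [smul_eq_mul] using h)
  have hreg : IsSMulRegular (TensorProduct R R A) (X : R) := hX.rTensor A
  have hA : IsSMulRegular A (X : R) := by
    have e := TensorProduct.lid R A
    exact (e.toEquiv.symm.isSMulRegular_congr (fun x => (e.symm.map_smul _ x))).mpr hreg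
  have hs : ∀ a, (X : R) • Ideal.Quotient.mk I a = Ideal.Quotient.mk I (C X * a) := by
    intro a; rw [← smul_eq_C_mul]; rfl
  refine h2 (hA ?_)
  show (X : R) • Ideal.Quotient.mk I ((X : Polynomial R) ^ p - X) = (X : R) • (0 : A)
  have hz : ((X : R) • (0 : A)) = (0 : A) := by simp [hs 0]
  rw [hz, hs, Ideal.Quotient.eq_zero_iff_mem, mul_sub]
  exact hmem
end

section
/- Let p be an odd prime, k a field of characteristic p, and n ≥ 1. The k-vector space of polynomials F ∈ k[X_1,…,X_n] that are additive in each variable, have degree < p^n in each variable, and are antisymmetric under permutations of the variables is one-dimensional, spanned by the 'Moore determinant' det(X_j^{p^{i}})_{0 ≤ i ≤ n-1, 1 ≤ j ≤ n} = Σ_{σ ∈ S_n} sgn(σ) X_1^{p^{σ(1)-1}} ⋯ X_n^{p^{σ(n)-1}}. -/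
open MvPolynomial

namespace Stmt19

lemma pow_of_choose (p : ℕ) (hp : p.Prime) : ∀ e, 0 < e →
    (∀ t, 0 < t → t < e → p ∣ e.choose t) → ∃ i, e = p ^ i := by
  haveI : Fact p.Prime := ⟨hp⟩
  intro e
  induction e using Nat.strong_induction_on with
  | _ e ih =>
    intro he h
    rcases eq_or_lt_of_le (Nat.succ_le_of_lt he) with h1 | h2
    · exact ⟨0, h1.symm⟩
    · have hpe : p ∣ e := by simpa [Nat.choose_one_right] using h 1 one_pos h2
      obtain ⟨f, rfl⟩ := hpe
      have hp2 := hp.two_le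
      have hf : 0 < f := by by_contra hc; push_neg at hc; interval_cases f; omega
      have hdvd : ∀ t, 0 < t → t < f → p ∣ f.choose t := by
        intro t ht htf
        have lucas := Choose.choose_modEq_choose_mod_mul_choose_div_nat
          (p := p) (n := p * f) (k := p * t)
        rw [Nat.mul_mod_right, Nat.mul_mod_right,
          Nat.mul_div_cancel_left _ hp.pos, Nat.mul_div_cancel_left _ hp.pos,
          Nat.choose_self, one_mul] at lucas
        have hd : p ∣ (p * f).choose (p * t) :=
          h (p * t) (by positivity) (by exact (Nat.mul_lt_mul_left hp.pos).mpr htf)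
        have h0 : (p * f).choose (p * t) ≡ 0 [MOD p] :=
          (Nat.modEq_zero_iff_dvd).mpr hd
        exact (Nat.modEq_zero_iff_dvd).mp (lucas.symm.trans h0)
      have hflt : f < p * f := by nlinarith
      obtain ⟨i, rfl⟩ := ih f hflt hf hdvd
      exact ⟨i + 1, by ring⟩

variable {k : Type*} [CommRing k] {n : ℕ}

lemma prodX {σ : Type*} [Fintype σ] (f : σ →₀ ℕ) :
    (∏ i, (X i : MvPolynomial σ k) ^ f i) = monomial f 1 := by
  rw [monomial_eq, C_1, one_mul, Finsupp.prod_fintype]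
  intro i; exact pow_zero _

noncomputable def em (j : Fin n) (m : Fin n →₀ ℕ) (t s : ℕ) : Option (Fin n) →₀ ℕ :=
  Finsupp.equivFunOnFinite.symm (fun o => o.elim s (fun i => if i = j then t else m i))

@[simp] lemma em_none (j : Fin n) (m : Fin n →₀ ℕ) (t s : ℕ) : em j m t s none = s := rfl

@[simp] lemma em_some (j : Fin n) (m : Fin n →₀ ℕ) (t s : ℕ) (i : Fin n) :
    em j m t s (some i) = if i = j then t else m i := rfl

lemma em_inj {j : Fin n} {m m' : Fin n →₀ ℕ} {t s t' s' : ℕ}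
    (h : em j m t s = em j m' t' s') :
    t = t' ∧ s = s' ∧ ∀ i, i ≠ j → m i = m' i := by
  refine ⟨?_, ?_, fun i hi => ?_⟩
  · have := DFunLike.congr_fun h (some j); simpa using this
  · have := DFunLike.congr_fun h none; simpa using this
  · have := DFunLike.congr_fun h (some i); simpa [hi] using this

lemma em_monomial (j : Fin n) (m : Fin n →₀ ℕ) (t s : ℕ) :
    (X (some j) : MvPolynomial (Option (Fin n)) k) ^ t * X none ^ s *
      ∏ i ∈ ({j}ᶜ : Finset (Fin n)), (X (some i) : MvPolynomial (Option (Fin n)) k) ^ m i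
    = monomial (em j m t s) 1 := by
  rw [← prodX (em j m t s), Fintype.prod_option, Fintype.prod_eq_mul_prod_compl j]
  have h : ∀ i ∈ ({j}ᶜ : Finset (Fin n)),
      (X (some i) : MvPolynomial (Option (Fin n)) k) ^ em j m t s (some i)
        = X (some i) ^ m i := fun i hi => by
    rw [em_some, if_neg (by simpa using hi)]
  rw [Finset.prod_congr rfl h, em_none, em_some, if_pos rfl]
  ring

lemma prod_phi (j : Fin n) (m : Fin n →₀ ℕ) :
    aeval (fun i => if i = j then X (some j) + X none
        else (X (some i) : MvPolynomial (Option (Fin n)) k)) (monomial m (1 : k))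
      = ∑ t ∈ Finset.range (m j + 1), monomial (em j m t (m j - t)) ((m j).choose t : k) := by
  rw [aeval_monomial, map_one, one_mul,
    Finsupp.prod_fintype _ _ (fun i => pow_zero _),
    Fintype.prod_eq_mul_prod_compl j, if_pos rfl]
  have h : ∀ i ∈ ({j}ᶜ : Finset (Fin n)),
      (if i = j then X (some j) + X none
          else (X (some i) : MvPolynomial (Option (Fin n)) k)) ^ m i
        = X (some i) ^ m i := fun i hi => by rw [if_neg (by simpa using hi)]
  rw [Finset.prod_congr rfl h, add_pow, Finset.sum_mul]
  refine Finset.sum_congr rfl fun t ht => ?_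
  have h2 : (X (some j) : MvPolynomial (Option (Fin n)) k) ^ t * X none ^ (m j - t)
        * ((m j).choose t : MvPolynomial (Option (Fin n)) k)
        * ∏ i ∈ ({j}ᶜ : Finset (Fin n)), (X (some i) : MvPolynomial (Option (Fin n)) k) ^ m i
      = ((m j).choose t : MvPolynomial (Option (Fin n)) k) * monomial (em j m t (m j - t)) 1 := by
    rw [← em_monomial]; ring
  rw [h2, ← C_eq_coe_nat, C_mul_monomial, mul_one]

lemma prod_psi (j : Fin n) (m : Fin n →₀ ℕ) :
    aeval (fun i => if i = j then X none
        else (X (some i) : MvPolynomial (Option (Fin n)) k)) (monomial m (1 : k))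
      = monomial (em j m 0 (m j)) 1 := by
  rw [aeval_monomial, map_one, one_mul,
    Finsupp.prod_fintype _ _ (fun i => pow_zero _),
    Fintype.prod_eq_mul_prod_compl j, if_pos rfl]
  have h : ∀ i ∈ ({j}ᶜ : Finset (Fin n)),
      (if i = j then X none
          else (X (some i) : MvPolynomial (Option (Fin n)) k)) ^ m i
        = X (some i) ^ m i := fun i hi => by rw [if_neg (by simpa using hi)]
  rw [Finset.prod_congr rfl h, ← em_monomial j m 0 (m j), pow_zero, one_mul]

lemma mapDomain_some (j : Fin n) (m : Fin n →₀ ℕ) :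
    Finsupp.mapDomain some m = em j m (m j) 0 := by
  ext o
  cases o with
  | none => rw [Finsupp.mapDomain_notin_range _ _ (by simp), em_none]
  | some i =>
    rw [Finsupp.mapDomain_apply (Option.some_injective _), em_some]
    by_cases hij : i = j
    · subst hij; rw [if_pos rfl]
    · rw [if_neg hij]

lemma coeff_phi (j : Fin n) (F : MvPolynomial (Fin n) k) (m : Fin n →₀ ℕ) (t s : ℕ)
    (hts : t + s = m j) :
    coeff (em j m t s) (aeval (fun i => if i = j then X (some j) + X none
        else (X (some i) : MvPolynomial (Option (Fin n)) k)) F)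
      = ((m j).choose t : k) * coeff m F := by
  conv_lhs => rw [← support_sum_monomial_coeff F]
  rw [map_sum, coeff_sum]
  have hterm : ∀ v : Fin n →₀ ℕ,
      coeff (em j m t s) (aeval (fun i => if i = j then X (some j) + X none
          else (X (some i) : MvPolynomial (Option (Fin n)) k)) (monomial v (coeff v F)))
        = coeff v F * ∑ t' ∈ Finset.range (v j + 1),
            (if em j v t' (v j - t') = em j m t s then ((v j).choose t' : k) else 0) := by
    intro v
    have h1 : monomial v (coeff v F) = coeff v F • monomial v (1 : k) := by
      rw [smul_monomial, smul_eq_mul, mul_one]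
    rw [h1, map_smul, prod_phi, coeff_smul, smul_eq_mul, coeff_sum]
    exact congrArg _ (Finset.sum_congr rfl fun t' _ => coeff_monomial _ _ _)
  rw [Finset.sum_congr rfl fun v _ => hterm v]
  rw [Finset.sum_eq_single m ?h0 ?h1]
  · have hinner : (∑ t' ∈ Finset.range (m j + 1),
        if em j m t' (m j - t') = em j m t s then ((m j).choose t' : k) else 0)
          = ((m j).choose t : k) := by
      rw [Finset.sum_eq_single t ?i0 ?i1]
      · rw [if_pos (by rw [show m j - t = s by omega])]
      · intro t' _ hne
        rw [if_neg fun hEq => hne (em_inj hEq).1]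
      · intro habs
        exact absurd (Finset.mem_range.mpr (by omega)) habs
    rw [hinner]; ring
  · intro v hv hne
    have hz : (∑ t' ∈ Finset.range (v j + 1),
        if em j v t' (v j - t') = em j m t s then ((v j).choose t' : k) else 0) = 0 := by
      apply Finset.sum_eq_zero
      intro t' ht'
      rw [if_neg]
      intro hEq
      obtain ⟨h1, h2, h3⟩ := em_inj hEq
      apply hne
      have ht'le : t' ≤ v j := Nat.lt_succ_iff.mp (Finset.mem_range.mp ht')
      have hvj : v j = m j := by omega
      ext i
      by_cases hij : i = j
      · subst hij; exact hvj
      · exact h3 i hij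
    rw [hz, mul_zero]
  · intro hm
    rw [notMem_support_iff.mp hm, zero_mul]

lemma coeff_psi (j : Fin n) (F : MvPolynomial (Fin n) k) (m : Fin n →₀ ℕ) (t s : ℕ)
    (hts : t + s = m j) :
    coeff (em j m t s) (aeval (fun i => if i = j then X none
        else (X (some i) : MvPolynomial (Option (Fin n)) k)) F)
      = if t = 0 then coeff m F else 0 := by
  conv_lhs => rw [← support_sum_monomial_coeff F]
  rw [map_sum, coeff_sum]
  have hterm : ∀ v : Fin n →₀ ℕ,
      coeff (em j m t s) (aeval (fun i => if i = j then X none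
          else (X (some i) : MvPolynomial (Option (Fin n)) k)) (monomial v (coeff v F)))
        = if em j v 0 (v j) = em j m t s then coeff v F else 0 := by
    intro v
    have h1 : monomial v (coeff v F) = coeff v F • monomial v (1 : k) := by
      rw [smul_monomial, smul_eq_mul, mul_one]
    rw [h1, map_smul, coeff_smul, prod_psi, coeff_monomial, smul_eq_mul, mul_ite, mul_one,
      mul_zero]
  rw [Finset.sum_congr rfl fun v _ => hterm v]
  by_cases ht : t = 0
  · subst ht
    have hs : s = m j := by omega
    subst hs
    rw [if_pos rfl, Finset.sum_eq_single m ?h0 ?h1]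
    · rw [if_pos rfl]
    · intro v hv hne
      rw [if_neg]
      intro hEq
      obtain ⟨h1, h2, h3⟩ := em_inj hEq
      apply hne
      ext i
      by_cases hij : i = j
      · subst hij; exact h2
      · exact h3 i hij
    · intro hm
      rw [if_pos rfl]
      exact notMem_support_iff.mp hm
  · rw [if_neg ht]
    apply Finset.sum_eq_zero
    intro v _
    rw [if_neg fun hEq => ht ((em_inj hEq).1).symm]

lemma coeff_ren (j : Fin n) (F : MvPolynomial (Fin n) k) (m : Fin n →₀ ℕ) (t s : ℕ)
    (hts : t + s = m j) :
    coeff (em j m t s) (rename some F) = if s = 0 then coeff m F else 0 := by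
  by_cases hs : s = 0
  · subst hs
    have ht : t = m j := by omega
    subst ht
    rw [if_pos rfl, ← mapDomain_some, coeff_rename_mapDomain _ (Option.some_injective _)]
  · rw [if_neg hs]
    apply coeff_rename_eq_zero
    intro u hu
    exfalso
    have h := DFunLike.congr_fun hu none
    rw [Finsupp.mapDomain_notin_range _ _ (by simp), em_none] at h
    exact hs h.symm

lemma lemA {p : ℕ} (hp : p.Prime) {kk : Type*} [Field kk] [CharP kk p]
    (F : MvPolynomial (Fin n) kk) (j : Fin n)
    (hadd : aeval (fun i => if i = j then X (some j) + X none
        else (X (some i) : MvPolynomial (Option (Fin n)) kk)) F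
      = rename some F + aeval (fun i => if i = j then X none
        else (X (some i) : MvPolynomial (Option (Fin n)) kk)) F)
    (m : Fin n →₀ ℕ) (hm : m ∈ F.support) : ∃ i, m j = p ^ i := by
  have key : ∀ t s, t + s = m j →
      ((m j).choose t : kk) * coeff m F
        = (if s = 0 then coeff m F else 0) + (if t = 0 then coeff m F else 0) := by
    intro t s hts
    have h := congrArg (coeff (em j m t s)) hadd
    rwa [coeff_phi j F m t s hts, coeff_add, coeff_ren j F m t s hts,
      coeff_psi j F m t s hts] at h
  have hne : coeff m F ≠ 0 := mem_support_iff.mp hm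
  have h0 : m j ≠ 0 := by
    intro h0
    have := key 0 0 (by omega)
    rw [h0] at this
    simp at this
    exact hne this
  have hdvd : ∀ t, 0 < t → t < m j → p ∣ (m j).choose t := by
    intro t ht ht'
    have h := key t (m j - t) (by omega)
    rw [if_neg (by omega), if_neg (by omega), add_zero] at h
    rcases mul_eq_zero.mp h with h | h
    · exact (CharP.cast_eq_zero_iff kk p _).mp h
    · exact absurd h hne
  exact pow_of_choose p hp _ (Nat.pos_of_ne_zero h0) hdvd

noncomputable def ms (p : ℕ) (τ : Equiv.Perm (Fin n)) : Fin n →₀ ℕ :=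
  Finsupp.equivFunOnFinite.symm (fun j => p ^ (τ j : ℕ))

@[simp] lemma ms_apply (p : ℕ) (τ : Equiv.Perm (Fin n)) (j : Fin n) :
    ms p τ j = p ^ (τ j : ℕ) := rfl

lemma ms_inj {p : ℕ} (hp : 1 < p) : Function.Injective (ms (n := n) p) := by
  intro τ τ' h
  ext j
  have h2 := DFunLike.congr_fun h j
  simp only [ms_apply] at h2
  exact congrArg Fin.val (Fin.val_injective (Nat.pow_right_injective hp h2) : τ j = τ' j)

noncomputable def Mo (p : ℕ) (k : Type*) [CommRing k] (n : ℕ) : MvPolynomial (Fin n) k :=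
  ∑ σ : Equiv.Perm (Fin n), ((Equiv.Perm.sign σ : ℤ) : k) • monomial (ms p σ) 1

lemma M_eq (p : ℕ) :
    (∑ σ : Equiv.Perm (Fin n), ((Equiv.Perm.sign σ : ℤ) : k) •
        ∏ j, (X j : MvPolynomial (Fin n) k) ^ p ^ (σ j : ℕ))
      = Mo p k n := by
  refine Finset.sum_congr rfl fun σ _ => ?_
  rw [show (∏ j, (X j : MvPolynomial (Fin n) k) ^ p ^ (σ j : ℕ))
      = ∏ j, (X j : MvPolynomial (Fin n) k) ^ (ms p σ) j from rfl, prodX]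

lemma coeff_M_ms {p : ℕ} (hp : 1 < p) (τ : Equiv.Perm (Fin n)) :
    coeff (ms p τ) (Mo p k n) = ((Equiv.Perm.sign τ : ℤ) : k) := by
  rw [Mo, coeff_sum, Finset.sum_eq_single τ ?h0 ?h1]
  · rw [coeff_smul, coeff_monomial, if_pos rfl, smul_eq_mul, mul_one]
  · intro σ _ hne
    rw [coeff_smul, coeff_monomial, if_neg (fun h => hne (ms_inj hp h)), smul_eq_mul, mul_zero]
  · intro h; exact absurd (Finset.mem_univ τ) h

lemma coeff_M_zero {p : ℕ} (m : Fin n →₀ ℕ) (hm : ∀ τ : Equiv.Perm (Fin n), ms p τ ≠ m) :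
    coeff m (Mo p k n) = 0 := by
  rw [Mo, coeff_sum]
  apply Finset.sum_eq_zero
  intro σ _
  rw [coeff_smul, coeff_monomial, if_neg (hm σ), smul_eq_mul, mul_zero]

lemma coeff_sign {F : MvPolynomial (Fin n) k}
    (hsym : ∀ σ : Equiv.Perm (Fin n),
      rename (σ : Fin n → Fin n) F = ((Equiv.Perm.sign σ : ℤ) : k) • F)
    (σ : Equiv.Perm (Fin n)) (m : Fin n →₀ ℕ) :
    coeff m F = ((Equiv.Perm.sign σ : ℤ) : k)
      * coeff (Finsupp.mapDomain (σ : Fin n → Fin n) m) F := by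
  have h := congrArg (coeff (Finsupp.mapDomain (σ : Fin n → Fin n) m)) (hsym σ)
  rwa [coeff_rename_mapDomain _ σ.injective, coeff_smul, smul_eq_mul] at h

lemma mapDomain_ms (p : ℕ) (σ τ : Equiv.Perm (Fin n)) :
    Finsupp.mapDomain (σ : Fin n → Fin n) (ms p τ) = ms p (τ * σ⁻¹) := by
  ext i
  rw [Finsupp.mapDomain_equiv_apply]
  simp [Equiv.Perm.mul_apply, Equiv.Perm.inv_def]

lemma rename_Mo (p : ℕ) (σ₀ : Equiv.Perm (Fin n)) :
    rename (σ₀ : Fin n → Fin n) (Mo p k n) = ((Equiv.Perm.sign σ₀ : ℤ) : k) • Mo p k n := by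
  rw [Mo, map_sum, Finset.smul_sum]
  simp only [map_smul, rename_monomial, mapDomain_ms]
  refine Fintype.sum_equiv (Equiv.mulRight σ₀⁻¹) _ _ fun τ => ?_
  simp only [Equiv.coe_mulRight]
  rw [smul_smul]
  congr 1
  rw [Equiv.Perm.sign_mul, Equiv.Perm.sign_inv]
  rcases Int.units_eq_one_or (Equiv.Perm.sign τ) with h1 | h1 <;>
    rcases Int.units_eq_one_or (Equiv.Perm.sign σ₀) with h2 | h2 <;>
      simp [h1, h2]

lemma additive_monomial {p : ℕ} (hp : p.Prime) [CharP k p] (j : Fin n) (m : Fin n →₀ ℕ)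
    (hpow : ∃ i, m j = p ^ i) :
    aeval (fun i => if i = j then X (some j) + X none
        else (X (some i) : MvPolynomial (Option (Fin n)) k)) (monomial m (1 : k))
      = rename some (monomial m (1 : k))
        + aeval (fun i => if i = j then X none
            else (X (some i) : MvPolynomial (Option (Fin n)) k)) (monomial m (1 : k)) := by
  haveI : Fact p.Prime := ⟨hp⟩
  obtain ⟨i, hi⟩ := hpow
  rw [prod_psi, rename_monomial, mapDomain_some j m]
  rw [aeval_monomial, map_one, one_mul, Finsupp.prod_fintype _ _ (fun i' => pow_zero _),
    Fintype.prod_eq_mul_prod_compl j, if_pos rfl]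
  have h : ∀ i' ∈ ({j}ᶜ : Finset (Fin n)),
      (if i' = j then X (some j) + X none
          else (X (some i') : MvPolynomial (Option (Fin n)) k)) ^ m i'
        = X (some i') ^ m i' := fun i' hi' => by rw [if_neg (by simpa using hi')]
  rw [Finset.prod_congr rfl h, hi, add_pow_char_pow, add_mul, ← hi]
  rw [show (X (some j) : MvPolynomial (Option (Fin n)) k) ^ m j *
      ∏ i' ∈ ({j}ᶜ : Finset (Fin n)), (X (some i') : MvPolynomial (Option (Fin n)) k) ^ m i'
      = monomial (em j m (m j) 0) 1 from by rw [← em_monomial j m (m j) 0, pow_zero, mul_one],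
    show (X none : MvPolynomial (Option (Fin n)) k) ^ m j *
      ∏ i' ∈ ({j}ᶜ : Finset (Fin n)), (X (some i') : MvPolynomial (Option (Fin n)) k) ^ m i'
      = monomial (em j m 0 (m j)) 1 from by rw [← em_monomial j m 0 (m j), pow_zero, one_mul]]

lemma Mo_add {p : ℕ} (hp : p.Prime) [CharP k p] (j : Fin n) :
    aeval (fun i => if i = j then X (some j) + X none
        else (X (some i) : MvPolynomial (Option (Fin n)) k)) (Mo p k n)
      = rename some (Mo p k n)
        + aeval (fun i => if i = j then X none
            else (X (some i) : MvPolynomial (Option (Fin n)) k)) (Mo p k n) := by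
  rw [Mo, map_sum, map_sum, map_sum, ← Finset.sum_add_distrib]
  refine Finset.sum_congr rfl fun σ _ => ?_
  rw [map_smul, map_smul, map_smul, ← smul_add]
  exact congrArg _ (additive_monomial hp j (ms p σ) ⟨(σ j : ℕ), rfl⟩)

lemma Mo_deg {p : ℕ} (hp : p.Prime) (c : k) (j : Fin n) :
    degreeOf j (c • Mo p k n) < p ^ n := by
  have hpn : 0 < p ^ n := pow_pos hp.pos n
  rw [degreeOf_lt_iff hpn]
  intro m hm
  have h1 := MvPolynomial.support_smul hm
  rw [Mo] at h1
  obtain ⟨σ, -, hσ⟩ := Finset.mem_biUnion.mp (MvPolynomial.support_sum h1)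
  have h5 : m = ms p σ := Finset.mem_singleton.mp
    (support_monomial_subset (MvPolynomial.support_smul hσ))
  rw [h5]
  simpa using (Nat.pow_lt_pow_iff_right hp.one_lt).mpr (σ j).isLt

lemma support_ms {p : ℕ} (hp : p.Prime) (hodd : Odd p) {kk : Type*} [Field kk] [CharP kk p]
    (F : MvPolynomial (Fin n) kk)
    (h1 : ∀ j : Fin n, F.degreeOf j < p ^ n)
    (hpow : ∀ (j : Fin n) (m : Fin n →₀ ℕ), m ∈ F.support → ∃ i, m j = p ^ i)
    (h3 : ∀ σ : Equiv.Perm (Fin n),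
      rename (σ : Fin n → Fin n) F = ((Equiv.Perm.sign σ : ℤ) : kk) • F)
    (m : Fin n →₀ ℕ) (hm : m ∈ F.support) : ∃ τ : Equiv.Perm (Fin n), ms p τ = m := by
  have hexp : ∀ j : Fin n, ∃ i : Fin n, m j = p ^ (i : ℕ) := by
    intro j
    obtain ⟨i, hi⟩ := hpow j m hm
    have hlt : m j < p ^ n := lt_of_le_of_lt (monomial_le_degreeOf j hm) (h1 j)
    have hin : i < n := by
      rw [hi] at hlt
      exact (Nat.pow_lt_pow_iff_right hp.one_lt).mp hlt
    exact ⟨⟨i, hin⟩, hi⟩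
  choose idx hidx using hexp
  by_cases hinj : Function.Injective idx
  · refine ⟨Equiv.ofBijective idx (Finite.injective_iff_bijective.mp hinj), ?_⟩
    ext j
    rw [ms_apply]
    exact (hidx j).symm
  · exfalso
    obtain ⟨a, b, hab, hne⟩ := Function.not_injective_iff.mp hinj
    have hmab : m a = m b := by rw [hidx a, hidx b, hab]
    have hmap : Finsupp.mapDomain ((Equiv.swap a b : Equiv.Perm (Fin n)) : Fin n → Fin n) m
        = m := by
      ext i
      rw [Finsupp.mapDomain_equiv_apply, Equiv.symm_swap]
      rcases eq_or_ne i a with rfl | hia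
      · rw [Equiv.swap_apply_left]; exact hmab.symm
      rcases eq_or_ne i b with rfl | hib
      · rw [Equiv.swap_apply_right]; exact hmab
      · rw [Equiv.swap_apply_of_ne_of_ne hia hib]
    have hc := coeff_sign h3 (Equiv.swap a b) m
    rw [hmap, Equiv.Perm.sign_swap hne] at hc
    simp only [Units.val_neg, Units.val_one, Int.cast_neg, Int.cast_one, neg_mul, one_mul] at hc
    have h2 : (2 : kk) * coeff m F = 0 := by linear_combination hc
    have h2ne : (2 : kk) ≠ 0 := by
      intro h
      have hdvd : p ∣ 2 := (CharP.cast_eq_zero_iff kk p 2).mp (by exact_mod_cast h)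
      have hp2 : p = 2 := (Nat.prime_dvd_prime_iff_eq hp Nat.prime_two).mp hdvd
      exact absurd (hp2 ▸ hodd) (by decide)
    rcases mul_eq_zero.mp h2 with h | h
    · exact h2ne h
    · exact mem_support_iff.mp hm h

lemma forward {p : ℕ} (hp : p.Prime) (hodd : Odd p) {kk : Type*} [Field kk] [CharP kk p]
    (F : MvPolynomial (Fin n) kk)
    (h1 : ∀ j : Fin n, F.degreeOf j < p ^ n)
    (h2 : ∀ j : Fin n,
      aeval (fun i => if i = j then X (some j) + X none
          else (X (some i) : MvPolynomial (Option (Fin n)) kk)) F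
        = rename some F
          + aeval (fun i => if i = j then X none
              else (X (some i) : MvPolynomial (Option (Fin n)) kk)) F)
    (h3 : ∀ σ : Equiv.Perm (Fin n),
      rename (σ : Fin n → Fin n) F = ((Equiv.Perm.sign σ : ℤ) : kk) • F) :
    F = coeff (ms p 1) F • Mo p kk n := by
  apply MvPolynomial.ext
  intro m
  rw [coeff_smul, smul_eq_mul]
  by_cases hms : ∃ τ : Equiv.Perm (Fin n), ms p τ = m
  · obtain ⟨τ, rfl⟩ := hms
    rw [coeff_M_ms hp.one_lt]
    have hc := coeff_sign h3 τ (ms p τ)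
    rw [mapDomain_ms, mul_inv_cancel] at hc
    rw [hc]; ring
  · push_neg at hms
    rw [coeff_M_zero _ hms, mul_zero]
    by_contra hne
    obtain ⟨τ, hτ⟩ := support_ms hp hodd F h1
      (fun j m hm => lemA hp F j (h2 j) m hm) h3 m (mem_support_iff.mpr hne)
    exact hms τ hτ

lemma Mo_ne {p : ℕ} (hp : p.Prime) {kk : Type*} [Field kk] : Mo p kk n ≠ 0 := by
  intro h
  have h2 := congrArg (coeff (ms p 1)) h
  rw [coeff_M_ms hp.one_lt, coeff_zero] at h2
  simp at h2

end Stmt19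

/-- Over a field `k` of odd characteristic `p`, the space of polynomials in
`k[X_1,…,X_n]` that are additive in each variable, of degree `< p^n` in each variable,
and antisymmetric under permutations of the variables, consists exactly of the scalar
multiples of the Moore determinant
`Σ_{σ ∈ S_n} sgn(σ) X_1^{p^{σ(1)}} ⋯ X_n^{p^{σ(n)}}`, which is nonzero; so this space is
one-dimensional, spanned by the Moore determinant. -/
theorem stmt19 (p : ℕ) (hp : p.Prime) (hodd : Odd p) (k : Type*) [Field k] [CharP k p]
    (n : ℕ) (hn : 0 < n) :
    {F : MvPolynomial (Fin n) k |
        (∀ j : Fin n, F.degreeOf j < p ^ n) ∧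
        (∀ j : Fin n,
          aeval (fun i => if i = j then X (some j) + X none
              else (X (some i) : MvPolynomial (Option (Fin n)) k)) F
            = rename some F
              + aeval (fun i => if i = j then X none
                  else (X (some i) : MvPolynomial (Option (Fin n)) k)) F) ∧
        (∀ σ : Equiv.Perm (Fin n),
          rename (σ : Fin n → Fin n) F = ((Equiv.Perm.sign σ : ℤ) : k) • F)}
      = Set.range (fun c : k =>
          c • ∑ σ : Equiv.Perm (Fin n),
            ((Equiv.Perm.sign σ : ℤ) : k) • ∏ j, (X j : MvPolynomial (Fin n) k) ^ p ^ (σ j : ℕ))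
    ∧ (∑ σ : Equiv.Perm (Fin n),
        ((Equiv.Perm.sign σ : ℤ) : k) • ∏ j, (X j : MvPolynomial (Fin n) k) ^ p ^ (σ j : ℕ))
      ≠ 0 := by
  constructor
  · ext F
    simp only [Set.mem_setOf_eq, Set.mem_range]
    constructor
    · rintro ⟨h1, h2, h3⟩
      refine ⟨coeff (Stmt19.ms p 1) F, ?_⟩
      rw [Stmt19.M_eq]
      exact (Stmt19.forward hp hodd F h1 h2 h3).symm
    · rintro ⟨c, hc⟩
      have hc' : c • Stmt19.Mo p k n = F := by rw [← Stmt19.M_eq]; exact hc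
      rw [← hc']
      refine ⟨fun j => Stmt19.Mo_deg hp c j, fun j => ?_, fun σ => ?_⟩
      · rw [map_smul, map_smul, map_smul, Stmt19.Mo_add hp j, smul_add]
      · rw [map_smul, Stmt19.rename_Mo]
        exact smul_comm _ _ _
  · rw [Stmt19.M_eq]
    exact Stmt19.Mo_ne hp
end
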